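/- arXiv:1202.0898 — 8 statements merged into one kernel-verified Lean document; each statement's English description precedes it below -/
import Mathlib

section
/- For all α, β, x in [0,1], (αx + β(1−x))(1 − (αx + β(1−x))) ≥ |α − β| · x(1−x). -/
/-- For all `α, β, x ∈ [0,1]`,
`(αx + β(1−x))(1 − (αx + β(1−x))) ≥ |α − β| · x(1−x)`. -/
theorem mix_var_ge_abs_sub_mul
    (α β x : ℝ) (hα : α ∈ Set.Icc (0:ℝ) 1) (hβ : β ∈ Set.Icc (0:ℝ) 1)
    (hx : x ∈ Set.Icc (0:ℝ) 1) :
    (α * x + β * (1 - x)) * (1 - (α * x + β * (1 - x))) ≥ |α - β| * (x * (1 - x)) := by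
  obtain ⟨ha0, ha1⟩ := hα
  obtain ⟨hb0, hb1⟩ := hβ
  obtain ⟨hx0, hx1⟩ := hx
  rcases abs_cases (α - β) with ⟨h, _⟩ | ⟨h, _⟩ <;> rw [h] <;>
    nlinarith [mul_nonneg hx0 (sub_nonneg.2 hx1), mul_nonneg ha0 hb0,
      mul_nonneg (sub_nonneg.2 ha1) (sub_nonneg.2 hb1),
      mul_nonneg ha0 (sub_nonneg.2 hb1), mul_nonneg hb0 (sub_nonneg.2 ha1),
      mul_nonneg (mul_nonneg ha0 (sub_nonneg.2 ha1)) (mul_self_nonneg x),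
      mul_nonneg (mul_nonneg hb0 (sub_nonneg.2 hb1)) (mul_self_nonneg (1-x)),
      mul_nonneg (mul_nonneg hb0 (sub_nonneg.2 ha1)) (mul_nonneg hx0 (sub_nonneg.2 hx1)),
      mul_nonneg (mul_nonneg ha0 (sub_nonneg.2 hb1)) (mul_nonneg hx0 (sub_nonneg.2 hx1))]
end

section
/- For all α, β, x in [0,1], the function f(x) = h(αx + β(1−x)) − |α−β| h(x), where h(t) = −t log t − (1−t) log(1−t) is the binary entropy function, is convex on [0,1]. -/
/-- The binary entropy function `h(t) = −t log t − (1−t) log (1−t)`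
(with the convention `log 0 = 0`, so `h 0 = h 1 = 0`). -/
noncomputable def binEnt (t : ℝ) : ℝ := -t * Real.log t - (1 - t) * Real.log (1 - t)

lemma binEnt_eq : binEnt = Real.binEntropy := by
  funext t
  rw [Real.binEntropy_eq_negMulLog_add_negMulLog_one_sub, Real.negMulLog, Real.negMulLog, binEnt]
  ring

lemma key_ineq (α β x : ℝ) (hα : α ∈ Set.Icc (0:ℝ) 1) (hβ : β ∈ Set.Icc (0:ℝ) 1)
    (hx0 : 0 ≤ x) (hx1 : x ≤ 1) :
    |α - β| * (x * (1 - x)) ≤ (α * x + β * (1 - x)) * (1 - (α * x + β * (1 - x))) := by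
  obtain ⟨ha0, ha1⟩ := hα
  obtain ⟨hb0, hb1⟩ := hβ
  rcases abs_cases (α - β) with ⟨h, _⟩ | ⟨h, _⟩ <;> rw [h] <;>
    nlinarith [mul_nonneg (mul_nonneg ha0 (by linarith : (0:ℝ) ≤ 1 - α)) (sq_nonneg x),
      mul_nonneg (mul_nonneg hb0 (by linarith : (0:ℝ) ≤ 1 - β)) (sq_nonneg (1 - x)),
      mul_nonneg (mul_nonneg hb0 (by linarith : (0:ℝ) ≤ 1 - α))
        (mul_nonneg hx0 (by linarith : (0:ℝ) ≤ 1 - x)),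
      mul_nonneg (mul_nonneg ha0 (by linarith : (0:ℝ) ≤ 1 - β))
        (mul_nonneg hx0 (by linarith : (0:ℝ) ≤ 1 - x))]

/-- For all `α, β ∈ [0,1]`, the function
`x ↦ h(αx + β(1−x)) − |α−β| h(x)` is convex on `[0,1]`. -/
theorem convexOn_binEnt_mix_sub_abs_binEnt
    (α β : ℝ) (hα : α ∈ Set.Icc (0:ℝ) 1) (hβ : β ∈ Set.Icc (0:ℝ) 1) :
    ConvexOn ℝ (Set.Icc (0:ℝ) 1)
      (fun x => binEnt (α * x + β * (1 - x)) - |α - β| * binEnt x) := by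
  obtain ⟨ha0, ha1⟩ := hα
  obtain ⟨hb0, hb1⟩ := hβ
  rcases eq_or_ne α β with hab | hab
  · subst hab
    have heq : (fun x => binEnt (α * x + α * (1 - x)) - |α - α| * binEnt x)
        = fun _ => binEnt α := by
      funext x
      have : α * x + α * (1 - x) = α := by ring
      rw [this]
      simp
    rw [heq]
    exact convexOn_const _ (convex_Icc 0 1)
  -- nondegenerate case
  have hc : 0 < |α - β| := abs_pos.mpr (sub_ne_zero.mpr hab)
  set L : ℝ → ℝ := fun x => α * x + β * (1 - x) with hL
  -- interior facts
  have hy0 : ∀ x ∈ Set.Ioo (0:ℝ) 1, 0 < L x := by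
    intro x hx
    show (0:ℝ) < α * x + β * (1 - x)
    rcases hab.lt_or_gt with h | h
    · have hb : 0 < β := lt_of_le_of_lt ha0 h
      nlinarith [mul_nonneg ha0 hx.1.le, mul_pos hb (by linarith [hx.2] : (0:ℝ) < 1 - x)]
    · have ha : 0 < α := lt_of_le_of_lt hb0 h
      nlinarith [mul_nonneg hb0 (by linarith [hx.2] : (0:ℝ) ≤ 1 - x), mul_pos ha hx.1]
  have hy1 : ∀ x ∈ Set.Ioo (0:ℝ) 1, L x < 1 := by
    intro x hx
    show α * x + β * (1 - x) < 1
    rcases hab.lt_or_gt with h | h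
    · have ha : α < 1 := lt_of_lt_of_le h hb1
      nlinarith [mul_pos (by linarith : (0:ℝ) < 1 - α) hx.1,
        mul_nonneg (by linarith : (0:ℝ) ≤ 1 - β) (by linarith [hx.2] : (0:ℝ) ≤ 1 - x)]
    · have hb : β < 1 := lt_of_lt_of_le h ha1
      nlinarith [mul_pos (by linarith : (0:ℝ) < 1 - β) (by linarith [hx.2] : (0:ℝ) < 1 - x),
        mul_nonneg (by linarith : (0:ℝ) ≤ 1 - α) hx.1.le]
  have hLd : ∀ x : ℝ, HasDerivAt L (α - β) x := by
    intro x
    have h1 : HasDerivAt (fun x : ℝ => α * x) α x := by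
      simpa using (hasDerivAt_id x).const_mul α
    have h2 : HasDerivAt (fun x : ℝ => β * (1 - x)) (-β) x := by
      simpa using ((hasDerivAt_const x (1:ℝ)).sub (hasDerivAt_id x)).const_mul β
    exact (h1.add h2).congr_deriv (by ring)
  set f' : ℝ → ℝ := fun x =>
    (Real.log (1 - L x) - Real.log (L x)) * (α - β)
      - |α - β| * (Real.log (1 - x) - Real.log x) with hf'def
  set f'' : ℝ → ℝ := fun x =>
    (-(α - β) / (1 - L x) - (α - β) / L x) * (α - β)
      - |α - β| * (-1 / (1 - x) - 1 / x) with hf''def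
  apply convexOn_of_hasDerivWithinAt2_nonneg (convex_Icc 0 1) (f' := f') (f'' := f'')
  · -- continuity
    have : Continuous fun x => binEnt (L x) - |α - β| * binEnt x := by
      rw [binEnt_eq]
      exact (Real.binEntropy_continuous.comp (by continuity)).sub
        (continuous_const.mul Real.binEntropy_continuous)
    exact this.continuousOn
  · -- first derivative
    rw [interior_Icc]
    intro x hx
    have h1 : HasDerivAt binEnt (Real.log (1 - L x) - Real.log (L x)) (L x) := by
      rw [binEnt_eq]
      exact Real.hasDerivAt_binEntropy (hy0 x hx).ne' (hy1 x hx).ne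
    have h2 : HasDerivAt binEnt (Real.log (1 - x) - Real.log x) x := by
      rw [binEnt_eq]
      exact Real.hasDerivAt_binEntropy hx.1.ne' hx.2.ne
    exact ((h1.comp x (hLd x)).sub ((h2.const_mul _))).hasDerivWithinAt
  · -- second derivative
    rw [interior_Icc]
    intro x hx
    have hyx0 := hy0 x hx
    have hyx1 := hy1 x hx
    have hA : HasDerivAt (fun x => Real.log (1 - L x)) (-(α - β) / (1 - L x)) x := by
      have h : HasDerivAt (fun x => 1 - L x) (-(α - β)) x := by
        exact ((hasDerivAt_const x (1:ℝ)).sub (hLd x)).congr_deriv (by ring)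
      have := (Real.hasDerivAt_log (by linarith : (1:ℝ) - L x ≠ 0)).comp x h
      exact this.congr_deriv (by ring)
    have hB : HasDerivAt (fun x => Real.log (L x)) ((α - β) / L x) x := by
      have := (Real.hasDerivAt_log hyx0.ne').comp x (hLd x)
      exact this.congr_deriv (by ring)
    have hC : HasDerivAt (fun x => Real.log (1 - x)) (-1 / (1 - x)) x := by
      have h : HasDerivAt (fun x : ℝ => 1 - x) (-1) x := by
        exact ((hasDerivAt_const x (1:ℝ)).sub (hasDerivAt_id x)).congr_deriv (by ring)
      have := (Real.hasDerivAt_log (by linarith [hx.2] : (1:ℝ) - x ≠ 0)).comp x h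
      exact this.congr_deriv (by ring)
    have hD : HasDerivAt Real.log (1 / x) x := by
      simpa [one_div] using Real.hasDerivAt_log hx.1.ne'
    have : HasDerivAt f'
        ((-(α - β) / (1 - L x) - (α - β) / L x) * (α - β)
          - |α - β| * (-1 / (1 - x) - 1 / x)) x :=
      (((hA.sub hB).mul_const (α - β)).sub (((hC.sub hD)).const_mul _))
    exact this.hasDerivWithinAt
  · -- nonnegativity
    rw [interior_Icc]
    intro x hx
    have hyx0 := hy0 x hx
    have hyx1 := hy1 x hx
    have hx0 := hx.1
    have hx1 : (0:ℝ) < 1 - x := by linarith [hx.2]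
    have hy1' : (0:ℝ) < 1 - L x := by linarith
    have key : |α - β| * (x * (1 - x)) ≤ L x * (1 - L x) :=
      key_ineq α β x ⟨ha0, ha1⟩ ⟨hb0, hb1⟩ hx.1.le hx.2.le
    have habs : (α - β) * (α - β) = |α - β| * |α - β| := (abs_mul_abs_self _).symm
    show 0 ≤ (-(α - β) / (1 - L x) - (α - β) / L x) * (α - β)
        - |α - β| * (-1 / (1 - x) - 1 / x)
    have e1 : (-(α - β) / (1 - L x) - (α - β) / L x) * (α - β)
        = -(((α - β) * (α - β)) / (L x * (1 - L x))) := by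
      field_simp
      ring
    have e2 : |α - β| * (-1 / (1 - x) - 1 / x) = -(|α - β| / (x * (1 - x))) := by
      field_simp
      ring
    rw [e1, e2, habs, sub_neg_eq_add]
    have h3 : |α - β| * |α - β| / (L x * (1 - L x)) ≤ |α - β| / (x * (1 - x)) := by
      rw [div_le_div_iff₀ (by positivity) (by positivity)]
      nlinarith [mul_le_mul_of_nonneg_left key hc.le]
    linarith
end

section
/- Let U, V be binary random variables and X = U ⊕ V (XOR). Then for any random variables Y, Z such that (U,V) → X → (Y,Z) is a Markov chain, I(U;Y) + I(V;Z) ≤ max{I(X;Y), I(X;Z)}. -/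
open scoped BigOperators

noncomputable def probOf {Ω α : Type*} [Fintype Ω] [DecidableEq α]
    (p : Ω → ℝ) (X : Ω → α) (a : α) : ℝ :=
  ∑ ω, if X ω = a then p ω else 0

noncomputable def entOf {Ω α : Type*} [Fintype Ω] [Fintype α] [DecidableEq α]
    (p : Ω → ℝ) (X : Ω → α) : ℝ :=
  -∑ a, probOf p X a * Real.log (probOf p X a)

noncomputable def miOf {Ω α β : Type*} [Fintype Ω] [Fintype α] [DecidableEq α]
    [Fintype β] [DecidableEq β] (p : Ω → ℝ) (X : Ω → α) (Y : Ω → β) : ℝ :=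
  entOf p X + entOf p Y - entOf p (fun ω => (X ω, Y ω))

def IsPMF {Ω : Type*} [Fintype Ω] (p : Ω → ℝ) : Prop :=
  (∀ ω, 0 ≤ p ω) ∧ ∑ ω, p ω = 1

/-- The Markov chain condition `(U,V) → X → (Y,Z)`:
`(U,V)` and `(Y,Z)` are conditionally independent given `X`. -/
def MarkovUVXYZ {Ω 𝒰 𝒱 𝒳 𝒴 𝒵 : Type*} [Fintype Ω] [DecidableEq 𝒰] [DecidableEq 𝒱]
    [DecidableEq 𝒳] [DecidableEq 𝒴] [DecidableEq 𝒵]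
    (p : Ω → ℝ) (U : Ω → 𝒰) (V : Ω → 𝒱) (X : Ω → 𝒳) (Y : Ω → 𝒴) (Z : Ω → 𝒵) : Prop :=
  ∀ u v x y z,
    probOf p (fun ω => (U ω, V ω, X ω, Y ω, Z ω)) (u, v, x, y, z) * probOf p X x =
    probOf p (fun ω => (U ω, V ω, X ω)) (u, v, x) *
      probOf p (fun ω => (X ω, Y ω, Z ω)) (x, y, z)



/- ======================= auxiliary machinery ======================= -/

open Finset Real

section ProbOfLemmas

lemma iteSumZero {α : Type*} [Fintype α] (P : Prop) [Decidable P] (f : α → ℝ) :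
    (if P then ∑ a, f a else 0) = ∑ a, if P then f a else 0 := by
  split_ifs <;> simp

lemma probOf_nonneg' {Ω α : Type*} [Fintype Ω] [DecidableEq α] {p : Ω → ℝ}
    (hp : ∀ ω, 0 ≤ p ω) (X : Ω → α) (a : α) : 0 ≤ probOf p X a :=
  Finset.sum_nonneg fun ω _ => by by_cases h : X ω = a <;> simp [h, hp ω]

lemma sum_probOf' {Ω α : Type*} [Fintype Ω] [Fintype α] [DecidableEq α] (p : Ω → ℝ)
    (X : Ω → α) : ∑ a, probOf p X a = ∑ ω, p ω := by
  unfold probOf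
  rw [Finset.sum_comm]
  simp

lemma probOf_comp' {Ω γ δ : Type*} [Fintype Ω] [Fintype γ] [DecidableEq γ] [DecidableEq δ]
    (p : Ω → ℝ) (T : Ω → γ) (e : γ → δ) (d : δ) :
    probOf p (fun ω => e (T ω)) d = ∑ c, if e c = d then probOf p T c else 0 := by
  unfold probOf
  simp only [iteSumZero]
  rw [Finset.sum_comm]
  refine Finset.sum_congr rfl fun ω _ => ?_
  rw [Finset.sum_eq_single (T ω)]
  · simp
  · intro c _ hc
    simp [Ne.symm hc]
  · simp

lemma sumFiber {γ ρ δ : Type*} [Fintype γ] [Fintype ρ] [DecidableEq γ] [DecidableEq δ]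
    (φ : ρ → γ) (e : γ → δ) (d : δ) (hinj : Function.Injective φ)
    (hφ : ∀ r, e (φ r) = d) (hcover : ∀ c, e c = d → ∃ r, φ r = c) (f : γ → ℝ) :
    (∑ c, if e c = d then f c else 0) = ∑ r, f (φ r) := by
  rw [← Finset.sum_filter]
  rw [show Finset.univ.filter (fun c => e c = d) = Finset.univ.image φ from by
    ext c
    simp only [Finset.mem_filter, Finset.mem_image, Finset.mem_univ, true_and]
    constructor
    · exact hcover c
    · rintro ⟨r, rfl⟩; exact hφ r]
  exact Finset.sum_image fun r _ r' _ h => hinj h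

lemma probOf_fst' {Ω α β : Type*} [Fintype Ω] [Fintype α] [Fintype β] [DecidableEq α]
    [DecidableEq β] (p : Ω → ℝ) (f : Ω → α) (g : Ω → β) (a : α) :
    probOf p f a = ∑ b, probOf p (fun ω => (f ω, g ω)) (a, b) := by
  have h := probOf_comp' p (fun ω => (f ω, g ω)) Prod.fst a
  rw [show (fun ω => Prod.fst (f ω, g ω)) = f from rfl] at h
  rw [h, Fintype.sum_prod_type, Finset.sum_comm]
  simp [Finset.sum_ite_eq']

lemma probOf_snd' {Ω α β : Type*} [Fintype Ω] [Fintype α] [Fintype β] [DecidableEq α]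
    [DecidableEq β] (p : Ω → ℝ) (f : Ω → α) (g : Ω → β) (b : β) :
    probOf p g b = ∑ a, probOf p (fun ω => (f ω, g ω)) (a, b) := by
  have h := probOf_comp' p (fun ω => (f ω, g ω)) Prod.snd b
  rw [show (fun ω => Prod.snd (f ω, g ω)) = g from rfl] at h
  rw [h, Fintype.sum_prod_type]
  refine Finset.sum_congr rfl fun a _ => ?_
  simp [Finset.sum_ite_eq']

end ProbOfLemmas

section EntropyLemmas

/-- entropy of a (sub)distribution given as a function. -/
noncomputable def ent {β : Type*} [Fintype β] (f : β → ℝ) : ℝ := ∑ b, Real.negMulLog (f b)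

lemma jensen2 {a b c d : ℝ} (ha : 0 ≤ a) (hb : 0 ≤ b) (hc : 0 ≤ c) (hd : 0 ≤ d)
    (hab : a + b = 1) :
    a * Real.negMulLog c + b * Real.negMulLog d ≤ Real.negMulLog (a * c + b * d) := by
  have := Real.concaveOn_negMulLog.2 (Set.mem_Ici.2 hc) (Set.mem_Ici.2 hd) ha hb hab
  simpa [smul_eq_mul] using this

lemma ent_prod {α β : Type*} [Fintype α] [Fintype β] (μ : α → ℝ) (M : α → β → ℝ)
    (hM : ∀ x, μ x ≠ 0 → ∑ b, M x b = 1) :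
    ent (fun pr : α × β => μ pr.1 * M pr.1 pr.2) = ent μ + ∑ x, μ x * ent (M x) := by
  unfold ent
  rw [Fintype.sum_prod_type, ← Finset.sum_add_distrib]
  refine Finset.sum_congr rfl fun x _ => ?_
  rcases eq_or_ne (μ x) 0 with h | h
  · simp [h, Real.negMulLog_zero]
  · simp only [Real.negMulLog_mul]
    rw [Finset.sum_add_distrib, ← Finset.sum_mul, ← Finset.mul_sum, hM x h]
    ring

/-- mutual information between a binary input with law `μ` and the output of channel `W`. -/
noncomputable def mutInf {β : Type*} [Fintype β] (μ : Bool → ℝ) (W : Bool → β → ℝ) : ℝ :=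
  ent (fun b => ∑ x, μ x * W x b) - ∑ x, μ x * ent (W x)

/-- mutual information computed from a joint law. -/
noncomputable def mi2 {α β : Type*} [Fintype α] [Fintype β] (j : α × β → ℝ) : ℝ :=
  ent (fun a => ∑ b, j (a, b)) + ent (fun b => ∑ a, j (a, b)) - ent j

lemma mutInf_nonneg {β : Type*} [Fintype β] {μ : Bool → ℝ} {W : Bool → β → ℝ}
    (hμ : ∀ x, 0 ≤ μ x) (hμ1 : ∑ x, μ x = 1) (hW : ∀ x y, 0 ≤ W x y) : 0 ≤ mutInf μ W := by
  unfold mutInf ent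
  rw [sub_nonneg]
  have h2 : ∑ x, μ x * ∑ b, Real.negMulLog (W x b)
      = ∑ b, ∑ x : Bool, μ x * Real.negMulLog (W x b) := by
    simp only [Finset.mul_sum]
    exact Finset.sum_comm
  rw [h2]
  refine Finset.sum_le_sum fun b _ => ?_
  have h1 : μ true + μ false = 1 := by simpa [Fintype.sum_bool] using hμ1
  simpa [Fintype.sum_bool] using
    jensen2 (hμ true) (hμ false) (hW true b) (hW false b) h1

lemma mutInf_mix_le {β : Type*} [Fintype β] (ν : Bool → ℝ) (W : Bool → β → ℝ) (x₀ : Bool)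
    (l : ℝ) (hν : ∀ x, 0 ≤ ν x) (hW : ∀ x y, 0 ≤ W x y) (hl : 0 ≤ l) (hl1 : l ≤ 1) :
    l * mutInf ν W ≤ mutInf (fun x => l * ν x + (1 - l) * (if x = x₀ then 1 else 0)) W := by
  unfold mutInf
  have key : ∀ b, l * Real.negMulLog (∑ x, ν x * W x b) + (1 - l) * Real.negMulLog (W x₀ b)
      ≤ Real.negMulLog (∑ x, (l * ν x + (1 - l) * (if x = x₀ then 1 else 0)) * W x b) := by
    intro b
    have hsum : ∑ x, (l * ν x + (1 - l) * (if x = x₀ then 1 else 0)) * W x b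
        = l * (∑ x, ν x * W x b) + (1 - l) * W x₀ b := by
      cases x₀ <;> (simp [Fintype.sum_bool]; ring)
    rw [hsum]
    exact jensen2 hl (by linarith) (Finset.sum_nonneg fun x _ => mul_nonneg (hν x) (hW x b))
      (hW x₀ b) (by ring)
  have hEnt : l * ent (fun b => ∑ x, ν x * W x b) + (1 - l) * ent (W x₀)
      ≤ ent (fun b => ∑ x, (l * ν x + (1 - l) * (if x = x₀ then 1 else 0)) * W x b) := by
    unfold ent
    rw [Finset.mul_sum, Finset.mul_sum, ← Finset.sum_add_distrib]
    exact Finset.sum_le_sum fun b _ => key b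
  have hlin : ∑ x, (l * ν x + (1 - l) * (if x = x₀ then 1 else 0)) * ent (W x)
      = l * ∑ x, ν x * ent (W x) + (1 - l) * ent (W x₀) := by
    cases x₀ <;> (simp [Fintype.sum_bool]; ring)
  rw [hlin]
  linarith

lemma mutInf_dirac {β : Type*} [Fintype β] {μ : Bool → ℝ} (W : Bool → β → ℝ) (x₀ : Bool)
    (h1 : μ x₀ = 1) (h0 : μ (!x₀) = 0) : mutInf μ W = 0 := by
  cases x₀ <;> (unfold mutInf; simp_all [Fintype.sum_bool])

lemma min4 {α β γ δ : ℝ} (h1 : 0 ≤ α) (h2 : 0 ≤ β) (h3 : 0 ≤ γ) (h4 : 0 ≤ δ)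
    (hab : α + β = 1) (hgd : γ + δ = 1) :
    1 ≤ (min γ α + min δ β) + (min δ α + min γ β) := by
  simp only [min_def]
  split_ifs <;> linarith

end EntropyLemmas

section CoreSetup

lemma sumXor (u : Bool) (f : Bool → ℝ) : ∑ x, f (xor u x) = ∑ v, f v := by
  cases u <;> simp [Fintype.sum_bool, add_comm]

lemma xorCancel : ∀ u x : Bool, xor u (xor u x) = x := by decide

/-- marginal law of `X = U ⊕ V` built from the joint law `q` of `(U,V)`. -/
noncomputable def pixF (q : Bool → Bool → ℝ) : Bool → ℝ := fun x => ∑ u, q u (xor u x)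
/-- marginal law of `U` built from the joint law `q` of `(U,V)`. -/
noncomputable def pUF (q : Bool → Bool → ℝ) : Bool → ℝ := fun u => ∑ v, q u v
/-- conditional law of `X` given `U = u`. -/
noncomputable def condF (q : Bool → Bool → ℝ) : Bool → Bool → ℝ :=
  fun u x => if pUF q u = 0 then pixF q x else q u (xor u x) / pUF q u
/-- transposed joint law. -/
noncomputable def flipQ (q : Bool → Bool → ℝ) : Bool → Bool → ℝ := fun v u => q u v

variable {𝒴 : Type*} [Fintype 𝒴] (q : Bool → Bool → ℝ) (W : Bool → 𝒴 → ℝ)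

lemma pUF_eq (u : Bool) : pUF q u = ∑ x, q u (xor u x) := (sumXor u (q u)).symm

lemma qx_le (hq : ∀ u v, 0 ≤ q u v) (u x : Bool) : q u (xor u x) ≤ pUF q u := by
  rw [pUF_eq]
  exact Finset.single_le_sum (f := fun x' => q u (xor u x')) (fun i _ => hq u _) (mem_univ x)

lemma qx_zero (hq : ∀ u v, 0 ≤ q u v) {u : Bool} (x : Bool) (h : pUF q u = 0) :
    q u (xor u x) = 0 := le_antisymm (h ▸ qx_le q hq u x) (hq u _)

lemma pix_sum_one (hq1 : ∑ u, ∑ v, q u v = 1) : ∑ x, pixF q x = 1 := by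
  unfold pixF
  rw [Finset.sum_comm]
  rw [show (∑ u', ∑ x, q u' (xor u' x)) = ∑ u', ∑ v, q u' v from
    Finset.sum_congr rfl fun u' _ => sumXor u' (q u')]
  exact hq1

lemma pix_nonneg (hq : ∀ u v, 0 ≤ q u v) (x : Bool) : 0 ≤ pixF q x :=
  Finset.sum_nonneg fun u _ => hq u _

lemma pUF_nonneg (hq : ∀ u v, 0 ≤ q u v) (u : Bool) : 0 ≤ pUF q u :=
  Finset.sum_nonneg fun v _ => hq u v

lemma cond_nonneg (hq : ∀ u v, 0 ≤ q u v) (u x : Bool) : 0 ≤ condF q u x := by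
  unfold condF
  split_ifs with h
  · exact Finset.sum_nonneg fun i _ => hq i _
  · exact div_nonneg (hq u _) (Finset.sum_nonneg fun i _ => hq u _)

lemma cond_sum_one (hq1 : ∑ u, ∑ v, q u v = 1) (u : Bool) : ∑ x, condF q u x = 1 := by
  unfold condF
  rcases eq_or_ne (pUF q u) 0 with h | h
  · simp only [h, if_pos rfl]
    exact pix_sum_one q hq1
  · simp only [if_neg h]
    rw [← Finset.sum_div, ← pUF_eq]
    exact div_self h

lemma pix_mix (hq : ∀ u v, 0 ≤ q u v) (x : Bool) :
    pixF q x = ∑ u, pUF q u * condF q u x := by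
  refine Finset.sum_congr rfl fun u _ => ?_
  rcases eq_or_ne (pUF q u) 0 with h | h
  · rw [condF]
    simp only [h, if_pos rfl, zero_mul]
    exact qx_zero q hq x h
  · rw [condF]
    simp only [if_neg h]
    field_simp

lemma row_eq (hq : ∀ u v, 0 ≤ q u v) (u : Bool) (y : 𝒴) :
    (∑ v, q u v * W (xor u v) y) = pUF q u * ∑ x, condF q u x * W x y := by
  have hre : (∑ v, q u v * W (xor u v) y) = ∑ x, q u (xor u x) * W x y := by
    rw [← sumXor u (fun v => q u v * W (xor u v) y)]
    exact Finset.sum_congr rfl fun x _ => by rw [xorCancel]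
  rw [hre]
  rcases eq_or_ne (pUF q u) 0 with h | h
  · rw [h, zero_mul]
    exact Finset.sum_eq_zero fun x _ => by rw [qx_zero q hq x h, zero_mul]
  · rw [Finset.mul_sum]
    refine Finset.sum_congr rfl fun x _ => ?_
    rw [condF]
    simp only [if_neg h]
    field_simp

/-- Chain-rule identity: `I(U;Y) = I(X;Y) - ∑_u p_U(u)·I(X;Y | U = u)`. -/
lemma mi2_side (hq : ∀ u v, 0 ≤ q u v) (hq1 : ∑ u, ∑ v, q u v = 1)
    (hW1 : ∀ x, ∑ y, W x y = 1) :
    mi2 (fun pr : Bool × 𝒴 => ∑ v, q pr.1 v * W (xor pr.1 v) pr.2)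
      = mutInf (pixF q) W - ∑ u, pUF q u * mutInf (condF q u) W := by
  have hmarg1 : (fun a : Bool => ∑ y, ∑ v, q a v * W (xor a v) y) = pUF q := by
    funext a
    rw [Finset.sum_comm, pUF]
    exact Finset.sum_congr rfl fun v _ => by rw [← Finset.mul_sum, hW1, mul_one]
  have hmarg2 : (fun y : 𝒴 => ∑ a : Bool, ∑ v, q a v * W (xor a v) y)
      = fun y => ∑ x, pixF q x * W x y := by
    funext y
    rw [show (∑ a : Bool, ∑ v, q a v * W (xor a v) y)
        = ∑ a : Bool, ∑ x, q a (xor a x) * W x y from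
      Finset.sum_congr rfl fun a _ => by
        rw [← sumXor a (fun v => q a v * W (xor a v) y)]
        exact Finset.sum_congr rfl fun x _ => by rw [xorCancel]]
    rw [Finset.sum_comm]
    exact Finset.sum_congr rfl fun x _ => by rw [pixF, Finset.sum_mul]
  have hjoint : ent (fun pr : Bool × 𝒴 => ∑ v, q pr.1 v * W (xor pr.1 v) pr.2)
      = ent (pUF q) + ∑ u, pUF q u * ent (fun y => ∑ x, condF q u x * W x y) := by
    rw [show (fun pr : Bool × 𝒴 => ∑ v, q pr.1 v * W (xor pr.1 v) pr.2)
        = fun pr : Bool × 𝒴 => pUF q pr.1 * ∑ x, condF q pr.1 x * W x pr.2 from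
      funext fun pr => row_eq q W hq pr.1 pr.2]
    exact ent_prod (pUF q) (fun u y => ∑ x, condF q u x * W x y)
      (fun u _ => by
        rw [Finset.sum_comm]
        rw [show (∑ x, ∑ y, condF q u x * W x y) = ∑ x, condF q u x from
          Finset.sum_congr rfl fun x _ => by rw [← Finset.mul_sum, hW1, mul_one]]
        exact cond_sum_one q hq1 u)
  have hcross : ∑ u, pUF q u * (∑ x, condF q u x * ent (W x)) = ∑ x, pixF q x * ent (W x) := by
    rw [show (∑ u, pUF q u * (∑ x, condF q u x * ent (W x)))
        = ∑ u, ∑ x, pUF q u * condF q u x * ent (W x) from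
      Finset.sum_congr rfl fun u _ => by
        rw [Finset.mul_sum]
        exact Finset.sum_congr rfl fun x _ => by ring]
    rw [Finset.sum_comm]
    refine Finset.sum_congr rfl fun x _ => ?_
    rw [pix_mix q hq x, Finset.sum_mul]
  unfold mi2 mutInf
  rw [hjoint, hmarg1, hmarg2]
  rw [show (∑ u, pUF q u * (ent (fun b => ∑ x, condF q u x * W x b)
        - ∑ x, condF q u x * ent (W x)))
      = (∑ u, pUF q u * ent (fun b => ∑ x, condF q u x * W x b))
        - ∑ u, pUF q u * (∑ x, condF q u x * ent (W x)) from by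
    rw [← Finset.sum_sub_distrib]
    exact Finset.sum_congr rfl fun u _ => by ring]
  rw [hcross]
  ring

lemma mi2_X (pp : Bool → ℝ) (hW1 : ∀ x, ∑ y, W x y = 1) :
    mi2 (fun pr : Bool × 𝒴 => pp pr.1 * W pr.1 pr.2) = mutInf pp W := by
  unfold mi2 mutInf
  have h1 : (fun a : Bool => ∑ y, pp a * W a y) = pp := by
    funext a; rw [← Finset.mul_sum, hW1, mul_one]
  rw [ent_prod pp W (fun x _ => hW1 x), h1]
  ring

lemma per_u (hq : ∀ u v, 0 ≤ q u v) (hq1 : ∑ u, ∑ v, q u v = 1)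
    (hW : ∀ x y, 0 ≤ W x y)
    (hpf : pixF q false ≠ 0) (hpt : pixF q true ≠ 0) (u : Bool) :
    mutInf (pixF q) W
        * min (q u (xor u true) / pixF q true) (q u (xor u false) / pixF q false)
      ≤ pUF q u * mutInf (condF q u) W := by
  have hpixnn := pix_nonneg q hq
  have hA0 : 0 ≤ mutInf (pixF q) W := mutInf_nonneg hpixnn (pix_sum_one q hq1) hW
  rcases eq_or_ne (pUF q u) 0 with h | h
  · rw [qx_zero q hq true h, qx_zero q hq false h, h]
    simp
  · have hpU : 0 < pUF q u := lt_of_le_of_ne (pUF_nonneg q hq u) (Ne.symm h)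
    have hπt : 0 < pixF q true := lt_of_le_of_ne (hpixnn true) (Ne.symm hpt)
    have hπf : 0 < pixF q false := lt_of_le_of_ne (hpixnn false) (Ne.symm hpf)
    have hcsum : condF q u true + condF q u false = 1 := by
      simpa [Fintype.sum_bool] using cond_sum_one q hq1 u
    have hπb : pixF q true + pixF q false = 1 := by
      simpa [Fintype.sum_bool] using pix_sum_one q hq1
    have hcnn := cond_nonneg q hq u
    have hcdef : ∀ x, condF q u x = q u (xor u x) / pUF q u := fun x => by
      rw [condF]; simp [h]
    have hmain : ∀ x₀ : Bool, condF q u (!x₀) ≤ pixF q (!x₀) →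
        mutInf (pixF q) W * (q u (xor u (!x₀)) / pixF q (!x₀))
          ≤ pUF q u * mutInf (condF q u) W := by
      intro x₀ hc
      have hπx : 0 < pixF q (!x₀) := by cases x₀ <;> assumption
      set l := condF q u (!x₀) / pixF q (!x₀) with hl_def
      have hl0 : 0 ≤ l := div_nonneg (hcnn _) hπx.le
      have hl1 : l ≤ 1 := (div_le_one hπx).2 hc
      have hlmul : l * pixF q (!x₀) = condF q u (!x₀) := div_mul_cancel₀ _ hπx.ne'
      have hlsplit : l * pixF q true + l * pixF q false = l := by
        rw [← mul_add, hπb, mul_one]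
      have hmix : condF q u = fun x => l * pixF q x + (1 - l) * (if x = x₀ then 1 else 0) := by
        funext x
        have hne : ¬ (!x₀) = x₀ := by cases x₀ <;> simp
        rcases eq_or_ne x (!x₀) with hx | hx
        · subst hx
          rw [if_neg hne, mul_zero, add_zero, hlmul]
        · have hx' : x = x₀ := by
            rcases Bool.eq_false_or_eq_true x₀ with h0 | h0 <;>
              rcases Bool.eq_false_or_eq_true x with h1 | h1 <;> simp_all
          rw [hx', if_pos rfl, mul_one]
          rcases Bool.eq_false_or_eq_true x₀ with h0 | h0 <;>
            rw [h0] at hlmul ⊢ <;>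
            simp only [Bool.not_true, Bool.not_false] at hlmul <;> linarith
      have hkey : l * mutInf (pixF q) W ≤ mutInf (condF q u) W := by
        rw [hmix]
        exact mutInf_mix_le (pixF q) W x₀ l hpixnn hW hl0 hl1
      have hmid : mutInf (pixF q) W * (q u (xor u (!x₀)) / pixF q (!x₀))
          = pUF q u * (l * mutInf (pixF q) W) := by
        rw [hl_def, hcdef]
        field_simp
      rw [hmid]
      exact mul_le_mul_of_nonneg_left hkey hpU.le
    rcases le_total (condF q u true) (pixF q true) with hc | hc
    · calc mutInf (pixF q) W
            * min (q u (xor u true) / pixF q true) (q u (xor u false) / pixF q false)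
          ≤ mutInf (pixF q) W * (q u (xor u true) / pixF q true) :=
            mul_le_mul_of_nonneg_left (min_le_left _ _) hA0
        _ ≤ pUF q u * mutInf (condF q u) W := by
            simpa using hmain false (by simpa using hc)
    · have hc' : condF q u false ≤ pixF q false := by linarith
      calc mutInf (pixF q) W
            * min (q u (xor u true) / pixF q true) (q u (xor u false) / pixF q false)
          ≤ mutInf (pixF q) W * (q u (xor u false) / pixF q false) :=
            mul_le_mul_of_nonneg_left (min_le_right _ _) hA0
        _ ≤ pUF q u * mutInf (condF q u) W := by
            simpa using hmain true (by simpa using hc')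

lemma pix_flip : pixF (flipQ q) = pixF q := by
  funext x
  rcases Bool.eq_false_or_eq_true x with h | h <;> subst h <;>
    simp [pixF, flipQ, Fintype.sum_bool, add_comm]

end CoreSetup

/-- The core inequality, stated for explicit joint laws. -/
theorem coreIneq {𝒴 𝒵 : Type*} [Fintype 𝒴] [Fintype 𝒵]
    (q : Bool → Bool → ℝ) (W : Bool → 𝒴 → ℝ) (K : Bool → 𝒵 → ℝ)
    (hq : ∀ u v, 0 ≤ q u v) (hq1 : ∑ u, ∑ v, q u v = 1)
    (hW : ∀ x y, 0 ≤ W x y) (hW1 : ∀ x, ∑ y, W x y = 1)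
    (hK : ∀ x z, 0 ≤ K x z) (hK1 : ∀ x, ∑ z, K x z = 1) :
    mi2 (fun pr : Bool × 𝒴 => ∑ v, q pr.1 v * W (xor pr.1 v) pr.2)
      + mi2 (fun pr : Bool × 𝒵 => ∑ u, q u pr.1 * K (xor u pr.1) pr.2)
    ≤ max (mi2 (fun pr : Bool × 𝒴 => pixF q pr.1 * W pr.1 pr.2))
          (mi2 (fun pr : Bool × 𝒵 => pixF q pr.1 * K pr.1 pr.2)) := by
  have hq' : ∀ v u, 0 ≤ flipQ q v u := fun v u => hq u v
  have hq'1 : ∑ v, ∑ u, flipQ q v u = 1 := by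
    rw [Finset.sum_comm]; exact hq1
  have hflip : (fun pr : Bool × 𝒵 => ∑ u, q u pr.1 * K (xor u pr.1) pr.2)
      = fun pr : Bool × 𝒵 => ∑ u, flipQ q pr.1 u * K (xor pr.1 u) pr.2 := by
    funext pr
    exact Finset.sum_congr rfl fun u _ => by rw [flipQ, Bool.xor_comm]
  rw [hflip, mi2_side q W hq hq1 hW1, mi2_side (flipQ q) K hq' hq'1 hK1,
    mi2_X W (pixF q) hW1, mi2_X K (pixF q) hK1, pix_flip]
  have hπb : pixF q true + pixF q false = 1 := by
    simpa [Fintype.sum_bool] using pix_sum_one q hq1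
  have hπnn := pix_nonneg q hq
  have hA0 : 0 ≤ mutInf (pixF q) W := mutInf_nonneg hπnn (pix_sum_one q hq1) hW
  have hB0 : 0 ≤ mutInf (pixF q) K := mutInf_nonneg hπnn (pix_sum_one q hq1) hK
  have hA1nn : 0 ≤ ∑ u, pUF q u * mutInf (condF q u) W :=
    Finset.sum_nonneg fun u _ => mul_nonneg (pUF_nonneg q hq u)
      (mutInf_nonneg (cond_nonneg q hq u) (cond_sum_one q hq1 u) hW)
  have hB1nn : 0 ≤ ∑ v, pUF (flipQ q) v * mutInf (condF (flipQ q) v) K :=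
    Finset.sum_nonneg fun v _ => mul_nonneg (pUF_nonneg (flipQ q) hq' v)
      (mutInf_nonneg (cond_nonneg (flipQ q) hq' v) (cond_sum_one (flipQ q) hq'1 v) hK)
  by_cases hdeg : pixF q false = 0 ∨ pixF q true = 0
  · have hAB : mutInf (pixF q) W = 0 ∧ mutInf (pixF q) K = 0 := by
      rcases hdeg with h | h
      · have h1 : pixF q true = 1 := by linarith
        exact ⟨mutInf_dirac W true h1 (by simpa using h),
               mutInf_dirac K true h1 (by simpa using h)⟩
      · have h1 : pixF q false = 1 := by linarith
        exact ⟨mutInf_dirac W false h1 (by simpa using h),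
               mutInf_dirac K false h1 (by simpa using h)⟩
    rw [hAB.1, hAB.2]
    have : max (0:ℝ) 0 = 0 := by simp
    rw [this]
    linarith
  · push_neg at hdeg
    obtain ⟨hpf, hpt⟩ := hdeg
    set A := mutInf (pixF q) W with hA
    set B := mutInf (pixF q) K with hB
    set A₁ := ∑ u, pUF q u * mutInf (condF q u) W with hA₁
    set B₁ := ∑ v, pUF (flipQ q) v * mutInf (condF (flipQ q) v) K with hB₁
    have hSA : A * (min (q false true / pixF q true) (q false false / pixF q false)
        + min (q true false / pixF q true) (q true true / pixF q false)) ≤ A₁ := by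
      have h1 := per_u q W hq hq1 hW hpf hpt false
      have h2 := per_u q W hq hq1 hW hpf hpt true
      simp only [Bool.xor_false, Bool.xor_true, Bool.not_false, Bool.not_true] at h1 h2
      rw [hA₁, Fintype.sum_bool]
      linarith [h1, h2]
    have hpf' : pixF (flipQ q) false ≠ 0 := by rw [pix_flip]; exact hpf
    have hpt' : pixF (flipQ q) true ≠ 0 := by rw [pix_flip]; exact hpt
    have hSB : B * (min (q true false / pixF q true) (q false false / pixF q false)
        + min (q false true / pixF q true) (q true true / pixF q false)) ≤ B₁ := by
      have h1 := per_u (flipQ q) K hq' hq'1 hK hpf' hpt' false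
      have h2 := per_u (flipQ q) K hq' hq'1 hK hpf' hpt' true
      rw [pix_flip] at h1 h2
      simp only [flipQ, Bool.xor_false, Bool.xor_true, Bool.not_false, Bool.not_true] at h1 h2
      rw [hB₁, Fintype.sum_bool]
      linarith [h1, h2]
    have hπfeq : pixF q false = q false false + q true true := by
      simp [pixF, Fintype.sum_bool, add_comm]
    have hπteq : pixF q true = q false true + q true false := by
      simp [pixF, Fintype.sum_bool, add_comm]
    have hab : q false false / pixF q false + q true true / pixF q false = 1 := by
      rw [← add_div, ← hπfeq]
      exact div_self hpf
    have hgd : q false true / pixF q true + q true false / pixF q true = 1 := by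
      rw [← add_div, ← hπteq]
      exact div_self hpt
    have hπfpos : 0 < pixF q false := lt_of_le_of_ne (hπnn false) (Ne.symm hpf)
    have hπtpos : 0 < pixF q true := lt_of_le_of_ne (hπnn true) (Ne.symm hpt)
    have dnn : ∀ a b : Bool, 0 ≤ q a b / pixF q true ∧ 0 ≤ q a b / pixF q false := fun a b =>
      ⟨div_nonneg (hq a b) hπtpos.le, div_nonneg (hq a b) hπfpos.le⟩
    have hS := min4 (dnn false false).2 (dnn true true).2 (dnn false true).1 (dnn true false).1
      hab hgd
    set SU := min (q false true / pixF q true) (q false false / pixF q false)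
      + min (q true false / pixF q true) (q true true / pixF q false) with hSU
    set SV := min (q true false / pixF q true) (q false false / pixF q false)
      + min (q false true / pixF q true) (q true true / pixF q false) with hSV
    have hS' : 1 ≤ SU + SV := hS
    have hSU0 : 0 ≤ SU := add_nonneg (le_min (dnn false true).1 (dnn false false).2)
      (le_min (dnn true false).1 (dnn true true).2)
    have hSV0 : 0 ≤ SV := add_nonneg (le_min (dnn true false).1 (dnn false false).2)
      (le_min (dnn false true).1 (dnn true true).2)
    have hminAB : min A B ≤ A₁ + B₁ := by
      rcases le_total A B with h | h
      · rw [min_eq_left h]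
        have e1 : A * 1 ≤ A * (SU + SV) := mul_le_mul_of_nonneg_left hS' hA0
        have e2 : A * SV ≤ B * SV := mul_le_mul_of_nonneg_right h hSV0
        nlinarith [hSA, hSB]
      · rw [min_eq_right h]
        have e1 : B * 1 ≤ B * (SU + SV) := mul_le_mul_of_nonneg_left hS' hB0
        have e2 : B * SU ≤ A * SU := mul_le_mul_of_nonneg_right h hSU0
        nlinarith [hSA, hSB]
    rcases le_total A B with h | h
    · rw [max_eq_right h]
      rw [min_eq_left h] at hminAB
      linarith
    · rw [max_eq_left h]
      rw [min_eq_right h] at hminAB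
      linarith

/-- `miOf` only depends on the joint law. -/
lemma miOf_eq_mi2 {Ω α β : Type*} [Fintype Ω] [Fintype α] [DecidableEq α]
    [Fintype β] [DecidableEq β] (p : Ω → ℝ) (F : Ω → α) (G : Ω → β) :
    miOf p F G = mi2 (fun c : α × β => probOf p (fun ω => (F ω, G ω)) c) := by
  unfold miOf mi2 entOf ent
  have h1 : (fun a : α => ∑ b, probOf p (fun ω => (F ω, G ω)) (a, b)) = probOf p F :=
    funext fun a => (probOf_fst' p F G a).symm
  have h2 : (fun b : β => ∑ a, probOf p (fun ω => (F ω, G ω)) (a, b)) = probOf p G :=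
    funext fun b => (probOf_snd' p F G b).symm
  rw [h1, h2]
  simp [Real.negMulLog, neg_mul, Finset.sum_neg_distrib]

/-- Let `U, V` be binary random variables and `X = U ⊕ V` (XOR).  Then for any
random variables `Y, Z` such that `(U,V) → X → (Y,Z)` is a Markov chain,
`I(U;Y) + I(V;Z) ≤ max {I(X;Y), I(X;Z)}`. -/
theorem xor_mutualInfo_le_max
    {Ω 𝒴 𝒵 : Type*} [Fintype Ω] [Fintype 𝒴] [DecidableEq 𝒴] [Fintype 𝒵] [DecidableEq 𝒵]
    (p : Ω → ℝ) (hp : IsPMF p)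
    (U V X : Ω → Bool) (Y : Ω → 𝒴) (Z : Ω → 𝒵)
    (hX : ∀ ω, X ω = xor (U ω) (V ω))
    (hM : MarkovUVXYZ p U V X Y Z) :
    miOf p U Y + miOf p V Z ≤ max (miOf p X Y) (miOf p X Z) := by
  classical
  obtain ⟨hpnn, hp1⟩ := hp
  -- notation
  set q : Bool → Bool → ℝ := fun u v => probOf p (fun ω => (U ω, V ω)) (u, v) with hqdef
  set Wc : Bool → 𝒴 → ℝ := fun x y =>
    if probOf p X x = 0 then probOf p Y y
    else probOf p (fun ω => (X ω, Y ω)) (x, y) / probOf p X x with hWdef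
  set Kc : Bool → 𝒵 → ℝ := fun x z =>
    if probOf p X x = 0 then probOf p Z z
    else probOf p (fun ω => (X ω, Z ω)) (x, z) / probOf p X x with hKdef
  -- basic hypotheses for the core inequality
  have hq : ∀ u v, 0 ≤ q u v := fun u v => probOf_nonneg' hpnn _ _
  have hq1 : ∑ u, ∑ v, q u v = 1 := by
    have h := sum_probOf' p (fun ω => (U ω, V ω))
    rw [Fintype.sum_prod_type, hp1] at h
    exact h
  -- marginal computation: P(X,Y)=(x,y) summed over z
  have hXY_marg : ∀ (x : Bool) (y : 𝒴), probOf p (fun ω => (X ω, Y ω)) (x, y)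
      = ∑ z, probOf p (fun ω => (X ω, Y ω, Z ω)) (x, y, z) := by
    intro x y
    have h := probOf_comp' p (fun ω => (X ω, Y ω, Z ω))
      (fun t => (t.1, t.2.1)) (x, y)
    rw [show (fun ω => ((fun t : Bool × 𝒴 × 𝒵 => (t.1, t.2.1)) ((X ω, Y ω, Z ω))))
        = (fun ω => (X ω, Y ω)) from rfl] at h
    rw [h, sumFiber (fun z' : 𝒵 => (x, y, z')) (fun t => (t.1, t.2.1)) (x, y)
      (fun r r' hr => by simpa [Prod.ext_iff] using hr)
      (fun r => rfl)
      (fun c hc => by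
        obtain ⟨h1, h2⟩ : c.1 = x ∧ c.2.1 = y := by simpa [Prod.ext_iff] using hc
        exact ⟨c.2.2, by simp [Prod.ext_iff, h1, h2]⟩)]
  have hXZ_marg : ∀ (x : Bool) (z : 𝒵), probOf p (fun ω => (X ω, Z ω)) (x, z)
      = ∑ y, probOf p (fun ω => (X ω, Y ω, Z ω)) (x, y, z) := by
    intro x z
    have h := probOf_comp' p (fun ω => (X ω, Y ω, Z ω))
      (fun t => (t.1, t.2.2)) (x, z)
    rw [show (fun ω => ((fun t : Bool × 𝒴 × 𝒵 => (t.1, t.2.2)) ((X ω, Y ω, Z ω))))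
        = (fun ω => (X ω, Z ω)) from rfl] at h
    rw [h, sumFiber (fun y' : 𝒴 => (x, y', z)) (fun t => (t.1, t.2.2)) (x, z)
      (fun r r' hr => by simpa [Prod.ext_iff] using hr)
      (fun r => rfl)
      (fun c hc => by
        obtain ⟨h1, h2⟩ : c.1 = x ∧ c.2.2 = z := by simpa [Prod.ext_iff] using hc
        exact ⟨c.2.1, by simp [Prod.ext_iff, h1, h2]⟩)]
  -- P(X=x) as marginal of the pair (X,·)
  have hX_margY : ∀ x : Bool, probOf p X x = ∑ y, probOf p (fun ω => (X ω, Y ω)) (x, y) :=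
    fun x => probOf_fst' p X Y x
  have hX_margZ : ∀ x : Bool, probOf p X x = ∑ z, probOf p (fun ω => (X ω, Z ω)) (x, z) :=
    fun x => probOf_fst' p X Z x
  -- the joint of (U,V,X) is supported on X = U ⊕ V
  have hq3 : ∀ u v x, probOf p (fun ω => (U ω, V ω, X ω)) (u, v, x)
      = if x = xor u v then q u v else 0 := by
    intro u v x
    rw [hqdef]
    unfold probOf
    rcases eq_or_ne x (xor u v) with h | h
    · rw [if_pos h]
      refine Finset.sum_congr rfl fun ω _ => ?_
      by_cases hab : U ω = u ∧ V ω = v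
      · simp [Prod.ext_iff, hab.1, hab.2, hX ω, h]
      · rw [not_and_or] at hab
        rcases hab with hab | hab <;> simp [Prod.ext_iff, hab]
    · rw [if_neg h]
      refine Finset.sum_eq_zero fun ω _ => ?_
      rw [if_neg]
      simp only [Prod.ext_iff]
      rintro ⟨h1, h2, h3⟩
      exact h (by rw [← h3, hX ω, h1, h2])
  -- P(X = x) in terms of q
  have hpXpix : ∀ x : Bool, probOf p X x = ∑ u, q u (xor u x) := by
    intro x
    have h := probOf_comp' p (fun ω => (U ω, V ω, X ω)) (fun t => t.2.2) x
    rw [show (fun ω => ((fun t : Bool × Bool × Bool => t.2.2) ((U ω, V ω, X ω)))) = X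
      from rfl] at h
    rw [h, sumFiber (fun r : Bool × Bool => (r.1, r.2, x)) (fun t => t.2.2) x
      (fun r r' hr => by simpa [Prod.ext_iff] using hr)
      (fun r => rfl)
      (fun c hc => ⟨(c.1, c.2.1), by simp [Prod.ext_iff, hc]⟩)]
    rw [Fintype.sum_prod_type]
    refine Finset.sum_congr rfl fun u _ => ?_
    have e1 : (∑ v, probOf p (fun ω => (U ω, V ω, X ω)) ((u, v).1, (u, v).2, x))
        = ∑ v, if x = xor u v then q u v else 0 :=
      Finset.sum_congr rfl fun v _ => hq3 u v x
    rw [e1]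
    have hiff : ∀ v : Bool, (x = xor u v) = (v = xor u x) := by
      intro v
      rcases Bool.eq_false_or_eq_true u with h | h <;>
        rcases Bool.eq_false_or_eq_true v with h' | h' <;>
        rcases Bool.eq_false_or_eq_true x with h'' | h'' <;> subst h <;> subst h' <;>
        subst h'' <;> simp
    simp only [hiff]
    simp [Finset.sum_ite_eq']
  -- channel rows are PMFs and nonnegative
  have hpY1 : ∑ y, probOf p Y y = 1 := by rw [sum_probOf' p Y, hp1]
  have hpZ1 : ∑ z, probOf p Z z = 1 := by rw [sum_probOf' p Z, hp1]
  have hWnn : ∀ x y, 0 ≤ Wc x y := by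
    intro x y
    rw [hWdef]
    dsimp only
    split_ifs with h
    · exact probOf_nonneg' hpnn _ _
    · exact div_nonneg (probOf_nonneg' hpnn _ _) (probOf_nonneg' hpnn _ _)
  have hKnn : ∀ x z, 0 ≤ Kc x z := by
    intro x z
    rw [hKdef]
    dsimp only
    split_ifs with h
    · exact probOf_nonneg' hpnn _ _
    · exact div_nonneg (probOf_nonneg' hpnn _ _) (probOf_nonneg' hpnn _ _)
  have hWrow : ∀ x, ∑ y, Wc x y = 1 := by
    intro x
    rw [hWdef]
    dsimp only
    split_ifs with h
    · exact hpY1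
    · rw [← Finset.sum_div, ← hX_margY x]
      exact div_self h
  have hKrow : ∀ x, ∑ z, Kc x z = 1 := by
    intro x
    rw [hKdef]
    dsimp only
    split_ifs with h
    · exact hpZ1
    · rw [← Finset.sum_div, ← hX_margZ x]
      exact div_self h
  -- bounds by the X-marginal
  have hP5_le : ∀ u v x y z, probOf p (fun ω => (U ω, V ω, X ω, Y ω, Z ω)) (u, v, x, y, z)
      ≤ probOf p X x := by
    intro u v x y z
    have h := probOf_comp' p (fun ω => (U ω, V ω, X ω, Y ω, Z ω)) (fun t => t.2.2.1) x
    rw [show (fun ω => ((fun t : Bool × Bool × Bool × 𝒴 × 𝒵 => t.2.2.1)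
        ((U ω, V ω, X ω, Y ω, Z ω)))) = X from rfl] at h
    rw [h]
    have := Finset.single_le_sum
      (f := fun c : Bool × Bool × Bool × 𝒴 × 𝒵 =>
        if c.2.2.1 = x then probOf p (fun ω => (U ω, V ω, X ω, Y ω, Z ω)) c else 0)
      (fun c _ => by split_ifs <;> [exact probOf_nonneg' hpnn _ _; exact le_refl 0])
      (Finset.mem_univ (u, v, x, y, z))
    simpa using this
  have hq3_le : ∀ u v x, probOf p (fun ω => (U ω, V ω, X ω)) (u, v, x) ≤ probOf p X x := by
    intro u v x
    have h := probOf_comp' p (fun ω => (U ω, V ω, X ω)) (fun t => t.2.2) x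
    rw [show (fun ω => ((fun t : Bool × Bool × Bool => t.2.2) ((U ω, V ω, X ω)))) = X
      from rfl] at h
    rw [h]
    have := Finset.single_le_sum
      (f := fun c : Bool × Bool × Bool =>
        if c.2.2 = x then probOf p (fun ω => (U ω, V ω, X ω)) c else 0)
      (fun c _ => by split_ifs <;> [exact probOf_nonneg' hpnn _ _; exact le_refl 0])
      (Finset.mem_univ (u, v, x))
    simpa using this
  have hXY_le : ∀ x y, probOf p (fun ω => (X ω, Y ω)) (x, y) ≤ probOf p X x := by
    intro x y
    rw [hX_margY x]
    exact Finset.single_le_sum (f := fun y' => probOf p (fun ω => (X ω, Y ω)) (x, y'))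
      (fun y' _ => probOf_nonneg' hpnn _ _) (Finset.mem_univ y)
  have hXZ_le : ∀ x z, probOf p (fun ω => (X ω, Z ω)) (x, z) ≤ probOf p X x := by
    intro x z
    rw [hX_margZ x]
    exact Finset.single_le_sum (f := fun z' => probOf p (fun ω => (X ω, Z ω)) (x, z'))
      (fun z' _ => probOf_nonneg' hpnn _ _) (Finset.mem_univ z)
  -- key conditional factorizations, summed over z (resp. y)
  have hP5z : ∀ u v x y, (∑ z, probOf p (fun ω => (U ω, V ω, X ω, Y ω, Z ω)) (u, v, x, y, z))
      = probOf p (fun ω => (U ω, V ω, X ω)) (u, v, x) * Wc x y := by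
    intro u v x y
    rcases eq_or_ne (probOf p X x) 0 with h | h
    · have hz : ∀ z, probOf p (fun ω => (U ω, V ω, X ω, Y ω, Z ω)) (u, v, x, y, z) = 0 :=
        fun z => le_antisymm (h ▸ hP5_le u v x y z) (probOf_nonneg' hpnn _ _)
      have h3 : probOf p (fun ω => (U ω, V ω, X ω)) (u, v, x) = 0 :=
        le_antisymm (h ▸ hq3_le u v x) (probOf_nonneg' hpnn _ _)
      rw [h3, zero_mul]
      exact Finset.sum_eq_zero fun z _ => hz z
    · have hz : ∀ z, probOf p (fun ω => (U ω, V ω, X ω, Y ω, Z ω)) (u, v, x, y, z)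
          = probOf p (fun ω => (U ω, V ω, X ω)) (u, v, x)
            * probOf p (fun ω => (X ω, Y ω, Z ω)) (x, y, z) / probOf p X x :=
        fun z => eq_div_of_mul_eq h (hM u v x y z)
      calc (∑ z, probOf p (fun ω => (U ω, V ω, X ω, Y ω, Z ω)) (u, v, x, y, z))
          = ∑ z, probOf p (fun ω => (U ω, V ω, X ω)) (u, v, x)
              * probOf p (fun ω => (X ω, Y ω, Z ω)) (x, y, z) / probOf p X x :=
            Finset.sum_congr rfl fun z _ => hz z
        _ = probOf p (fun ω => (U ω, V ω, X ω)) (u, v, x)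
              * (∑ z, probOf p (fun ω => (X ω, Y ω, Z ω)) (x, y, z)) / probOf p X x := by
            rw [← Finset.sum_div, ← Finset.mul_sum]
        _ = probOf p (fun ω => (U ω, V ω, X ω)) (u, v, x) * Wc x y := by
            rw [← hXY_marg x y, hWdef]
            dsimp only
            rw [if_neg h, mul_div_assoc]
  have hP5y : ∀ u v x z, (∑ y, probOf p (fun ω => (U ω, V ω, X ω, Y ω, Z ω)) (u, v, x, y, z))
      = probOf p (fun ω => (U ω, V ω, X ω)) (u, v, x) * Kc x z := by
    intro u v x z
    rcases eq_or_ne (probOf p X x) 0 with h | h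
    · have hy : ∀ y, probOf p (fun ω => (U ω, V ω, X ω, Y ω, Z ω)) (u, v, x, y, z) = 0 :=
        fun y => le_antisymm (h ▸ hP5_le u v x y z) (probOf_nonneg' hpnn _ _)
      have h3 : probOf p (fun ω => (U ω, V ω, X ω)) (u, v, x) = 0 :=
        le_antisymm (h ▸ hq3_le u v x) (probOf_nonneg' hpnn _ _)
      rw [h3, zero_mul]
      exact Finset.sum_eq_zero fun y _ => hy y
    · have hy : ∀ y, probOf p (fun ω => (U ω, V ω, X ω, Y ω, Z ω)) (u, v, x, y, z)
          = probOf p (fun ω => (U ω, V ω, X ω)) (u, v, x)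
            * probOf p (fun ω => (X ω, Y ω, Z ω)) (x, y, z) / probOf p X x :=
        fun y => eq_div_of_mul_eq h (hM u v x y z)
      calc (∑ y, probOf p (fun ω => (U ω, V ω, X ω, Y ω, Z ω)) (u, v, x, y, z))
          = ∑ y, probOf p (fun ω => (U ω, V ω, X ω)) (u, v, x)
              * probOf p (fun ω => (X ω, Y ω, Z ω)) (x, y, z) / probOf p X x :=
            Finset.sum_congr rfl fun y _ => hy y
        _ = probOf p (fun ω => (U ω, V ω, X ω)) (u, v, x)
              * (∑ y, probOf p (fun ω => (X ω, Y ω, Z ω)) (x, y, z)) / probOf p X x := by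
            rw [← Finset.sum_div, ← Finset.mul_sum]
        _ = probOf p (fun ω => (U ω, V ω, X ω)) (u, v, x) * Kc x z := by
            rw [← hXZ_marg x z, hKdef]
            dsimp only
            rw [if_neg h, mul_div_assoc]
  -- the four joint laws
  have hjUY : ∀ (u : Bool) (y : 𝒴), probOf p (fun ω => (U ω, Y ω)) (u, y)
      = ∑ v, q u v * Wc (xor u v) y := by
    intro u y
    have h := probOf_comp' p (fun ω => (U ω, V ω, X ω, Y ω, Z ω))
      (fun t => (t.1, t.2.2.2.1)) (u, y)
    rw [show (fun ω => ((fun t : Bool × Bool × Bool × 𝒴 × 𝒵 => (t.1, t.2.2.2.1))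
        ((U ω, V ω, X ω, Y ω, Z ω)))) = (fun ω => (U ω, Y ω)) from rfl] at h
    rw [h, sumFiber (fun r : Bool × Bool × 𝒵 => (u, r.1, r.2.1, y, r.2.2))
      (fun t => (t.1, t.2.2.2.1)) (u, y)
      (fun r r' hr => by simpa [Prod.ext_iff] using hr)
      (fun r => rfl)
      (fun c hc => by
        obtain ⟨h1, h2⟩ : c.1 = u ∧ c.2.2.2.1 = y := by simpa [Prod.ext_iff] using hc
        exact ⟨(c.2.1, c.2.2.1, c.2.2.2.2), by simp [Prod.ext_iff, h1, h2]⟩)]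
    rw [show (∑ r : Bool × Bool × 𝒵, probOf p (fun ω => (U ω, V ω, X ω, Y ω, Z ω))
        (u, r.1, r.2.1, y, r.2.2))
        = ∑ v, ∑ x, ∑ z, probOf p (fun ω => (U ω, V ω, X ω, Y ω, Z ω)) (u, v, x, y, z) from by
      simp [Fintype.sum_prod_type]]
    refine Finset.sum_congr rfl fun v _ => ?_
    rw [show (∑ x, ∑ z, probOf p (fun ω => (U ω, V ω, X ω, Y ω, Z ω)) (u, v, x, y, z))
        = ∑ x, probOf p (fun ω => (U ω, V ω, X ω)) (u, v, x) * Wc x y from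
      Finset.sum_congr rfl fun x _ => hP5z u v x y]
    rw [show (∑ x, probOf p (fun ω => (U ω, V ω, X ω)) (u, v, x) * Wc x y)
        = ∑ x, (if x = xor u v then q u v else 0) * Wc x y from
      Finset.sum_congr rfl fun x _ => by rw [hq3 u v x]]
    simp [ite_mul, Finset.sum_ite_eq']
  have hjVZ : ∀ (v : Bool) (z : 𝒵), probOf p (fun ω => (V ω, Z ω)) (v, z)
      = ∑ u, q u v * Kc (xor u v) z := by
    intro v z
    have h := probOf_comp' p (fun ω => (U ω, V ω, X ω, Y ω, Z ω))
      (fun t => (t.2.1, t.2.2.2.2)) (v, z)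
    rw [show (fun ω => ((fun t : Bool × Bool × Bool × 𝒴 × 𝒵 => (t.2.1, t.2.2.2.2))
        ((U ω, V ω, X ω, Y ω, Z ω)))) = (fun ω => (V ω, Z ω)) from rfl] at h
    rw [h, sumFiber (fun r : Bool × Bool × 𝒴 => (r.1, v, r.2.1, r.2.2, z))
      (fun t => (t.2.1, t.2.2.2.2)) (v, z)
      (fun r r' hr => by simpa [Prod.ext_iff] using hr)
      (fun r => rfl)
      (fun c hc => by
        obtain ⟨h1, h2⟩ : c.2.1 = v ∧ c.2.2.2.2 = z := by simpa [Prod.ext_iff] using hc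
        exact ⟨(c.1, c.2.2.1, c.2.2.2.1), by simp [Prod.ext_iff, h1, h2]⟩)]
    rw [show (∑ r : Bool × Bool × 𝒴, probOf p (fun ω => (U ω, V ω, X ω, Y ω, Z ω))
        (r.1, v, r.2.1, r.2.2, z))
        = ∑ u, ∑ x, ∑ y, probOf p (fun ω => (U ω, V ω, X ω, Y ω, Z ω)) (u, v, x, y, z) from by
      simp [Fintype.sum_prod_type]]
    refine Finset.sum_congr rfl fun u _ => ?_
    rw [show (∑ x, ∑ y, probOf p (fun ω => (U ω, V ω, X ω, Y ω, Z ω)) (u, v, x, y, z))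
        = ∑ x, probOf p (fun ω => (U ω, V ω, X ω)) (u, v, x) * Kc x z from
      Finset.sum_congr rfl fun x _ => hP5y u v x z]
    rw [show (∑ x, probOf p (fun ω => (U ω, V ω, X ω)) (u, v, x) * Kc x z)
        = ∑ x, (if x = xor u v then q u v else 0) * Kc x z from
      Finset.sum_congr rfl fun x _ => by rw [hq3 u v x]]
    simp [ite_mul, Finset.sum_ite_eq']
  have hjXY : ∀ (x : Bool) (y : 𝒴), probOf p (fun ω => (X ω, Y ω)) (x, y)
      = pixF q x * Wc x y := by
    intro x y
    have hpix : pixF q x = probOf p X x := by rw [pixF]; exact (hpXpix x).symm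
    rw [hpix]
    rcases eq_or_ne (probOf p X x) 0 with h | h
    · rw [h, zero_mul]
      exact le_antisymm (h ▸ hXY_le x y) (probOf_nonneg' hpnn _ _)
    · rw [hWdef]
      dsimp only
      rw [if_neg h, mul_div_cancel₀ _ h]
  have hjXZ : ∀ (x : Bool) (z : 𝒵), probOf p (fun ω => (X ω, Z ω)) (x, z)
      = pixF q x * Kc x z := by
    intro x z
    have hpix : pixF q x = probOf p X x := by rw [pixF]; exact (hpXpix x).symm
    rw [hpix]
    rcases eq_or_ne (probOf p X x) 0 with h | h
    · rw [h, zero_mul]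
      exact le_antisymm (h ▸ hXZ_le x z) (probOf_nonneg' hpnn _ _)
    · rw [hKdef]
      dsimp only
      rw [if_neg h, mul_div_cancel₀ _ h]
  -- convert the four mutual informations and conclude via the core inequality
  rw [miOf_eq_mi2 p U Y, miOf_eq_mi2 p V Z, miOf_eq_mi2 p X Y, miOf_eq_mi2 p X Z]
  rw [show (fun c : Bool × 𝒴 => probOf p (fun ω => (U ω, Y ω)) c)
      = (fun pr : Bool × 𝒴 => ∑ v, q pr.1 v * Wc (xor pr.1 v) pr.2) from
    funext fun c => hjUY c.1 c.2]
  rw [show (fun c : Bool × 𝒵 => probOf p (fun ω => (V ω, Z ω)) c)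
      = (fun pr : Bool × 𝒵 => ∑ u, q u pr.1 * Kc (xor u pr.1) pr.2) from
    funext fun c => hjVZ c.1 c.2]
  rw [show (fun c : Bool × 𝒴 => probOf p (fun ω => (X ω, Y ω)) c)
      = (fun pr : Bool × 𝒴 => pixF q pr.1 * Wc pr.1 pr.2) from
    funext fun c => hjXY c.1 c.2]
  rw [show (fun c : Bool × 𝒵 => probOf p (fun ω => (X ω, Z ω)) c)
      = (fun pr : Bool × 𝒵 => pixF q pr.1 * Kc pr.1 pr.2) from
    funext fun c => hjXZ c.1 c.2]
  exact coreIneq q Wc Kc hq hq1 hWnn hWrow hKnn hKrow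
end

section
/- Let U, V be binary with joint pmf p_{ij} = P(U=i, V=j) > 0 and X = U ⊕ V. Set α = p₀₀/(p₀₀+p₁₁) and β = p₀₁/(p₀₁+p₁₀). Then the function q ↦ H(U) − |α−β| H(X), where the conditional law p(u|x) is fixed and only the marginal q(x) varies, is convex in q(x) ∈ [0,1]; equivalently x ↦ h(αx + β(1−x)) − |α−β| h(x) is convex on [0,1]. -/
lemma binEnt_continuous : Continuous binEnt := by
  have h1 : Continuous fun t : ℝ => t * Real.log t := Real.continuous_mul_log
  have h2 : Continuous fun t : ℝ => (1 - t) * Real.log (1 - t) :=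
    h1.comp (continuous_const.sub continuous_id)
  have he : binEnt = fun t => -(t * Real.log t) - (1 - t) * Real.log (1 - t) := by
    funext t; simp only [binEnt]; ring
  rw [he]; exact h1.neg.sub h2

lemma hasDerivAt_binEnt {t : ℝ} (h0 : t ≠ 0) (h1 : t ≠ 1) :
    HasDerivAt binEnt (Real.log (1 - t) - Real.log t) t := by
  have ha : HasDerivAt (fun t : ℝ => t * Real.log t) (Real.log t + 1) t :=
    Real.hasDerivAt_mul_log h0
  have hb : HasDerivAt (fun t : ℝ => (1 - t) * Real.log (1 - t))
      (-(Real.log (1 - t) + 1)) t := by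
    have h := (Real.hasDerivAt_mul_log (x := 1 - t) (by intro h; apply h1; linarith)).comp t
      ((hasDerivAt_const t (1:ℝ)).sub (hasDerivAt_id t))
    exact h.congr_deriv (by ring)
  have h := ha.neg.sub hb
  have he : binEnt = fun t => -(t * Real.log t) - (1 - t) * Real.log (1 - t) := by
    funext t; simp only [binEnt]; ring
  rw [he]
  exact h.congr_deriv (by ring)

/-- Let `U, V` be binary with joint pmf `p_{ij} = P(U=i, V=j) > 0` and `X = U ⊕ V`.
Set `α = p₀₀/(p₀₀+p₁₁)` (i.e. `P(U=0|X=0)`) and `β = p₀₁/(p₀₁+p₁₀)` (i.e. `P(U=0|X=1)`).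
Then the function `q ↦ H(U) − |α−β| H(X)`, with `p(u|x)` fixed and the marginal
`q = P(X = 0)` varying, i.e. `x ↦ h(αx + β(1−x)) − |α−β| h(x)`, is convex on `[0,1]`.
(Here `false` encodes the value `0` and `true` the value `1`.) -/
theorem convexOn_of_xor_pmf
    (p : Bool × Bool → ℝ) (hpos : ∀ uv, 0 < p uv) (hsum : ∑ uv, p uv = 1)
    (α β : ℝ)
    (hα : α = p (false, false) / (p (false, false) + p (true, true)))
    (hβ : β = p (false, true) / (p (false, true) + p (true, false))) :
    ConvexOn ℝ (Set.Icc (0:ℝ) 1)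
      (fun x => binEnt (α * x + β * (1 - x)) - |α - β| * binEnt x) := by
  have hα0 : 0 < α := by
    rw [hα]; exact div_pos (hpos _) (add_pos (hpos _) (hpos _))
  have hα1 : α < 1 := by
    rw [hα, div_lt_one (add_pos (hpos _) (hpos _))]; linarith [hpos (true, true)]
  have hβ0 : 0 < β := by
    rw [hβ]; exact div_pos (hpos _) (add_pos (hpos _) (hpos _))
  have hβ1 : β < 1 := by
    rw [hβ, div_lt_one (add_pos (hpos _) (hpos _))]; linarith [hpos (true, false)]
  clear hα hβ hsum hpos
  apply convexOn_of_hasDerivWithinAt2_nonneg (f' := fun x =>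
      (Real.log (1 - (α * x + β * (1 - x))) - Real.log (α * x + β * (1 - x))) * (α - β)
        - |α - β| * (Real.log (1 - x) - Real.log x))
    (f'' := fun x =>
      |α - β| * (1 / (x * (1 - x)))
        - (α - β) ^ 2 * (1 / ((α * x + β * (1 - x)) * (1 - (α * x + β * (1 - x))))))
    (convex_Icc 0 1)
  · -- continuity
    exact ((binEnt_continuous.comp (by continuity)).sub
      (continuous_const.mul binEnt_continuous)).continuousOn
  · -- first derivative
    rw [interior_Icc]
    intro x hx
    obtain ⟨hx0, hx1⟩ := hx
    set s := α * x + β * (1 - x) with hs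
    have hs0 : 0 < s := by nlinarith
    have hs1 : s < 1 := by nlinarith
    have hg : HasDerivAt (fun x => α * x + β * (1 - x)) (α - β) x := by
      have h := (((hasDerivAt_id x).const_mul α).add
        (((hasDerivAt_const x (1:ℝ)).sub (hasDerivAt_id x)).const_mul β))
      exact h.congr_deriv (by ring)
    have h1 := (hasDerivAt_binEnt hs0.ne' hs1.ne).comp x hg
    have h2 := (hasDerivAt_binEnt hx0.ne' hx1.ne).const_mul |α - β|
    exact ((h1.sub h2).hasDerivWithinAt)
  · -- second derivative
    rw [interior_Icc]
    intro x hx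
    obtain ⟨hx0, hx1⟩ := hx
    set s := α * x + β * (1 - x) with hs
    have hs0 : 0 < s := by nlinarith
    have hs1 : s < 1 := by nlinarith
    have hg : HasDerivAt (fun x => α * x + β * (1 - x)) (α - β) x := by
      have h := (((hasDerivAt_id x).const_mul α).add
        (((hasDerivAt_const x (1:ℝ)).sub (hasDerivAt_id x)).const_mul β))
      exact h.congr_deriv (by ring)
    have hl1 : HasDerivAt (fun x => Real.log (1 - (α * x + β * (1 - x))))
        ((1 - s)⁻¹ * (0 - (α - β))) x :=
      HasDerivAt.comp (h₂ := Real.log) x (Real.hasDerivAt_log (by linarith : (0:ℝ) < 1 - s).ne')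
        ((hasDerivAt_const x (1:ℝ)).sub hg)
    have hl2 : HasDerivAt (fun x => Real.log (α * x + β * (1 - x))) (s⁻¹ * (α - β)) x :=
      HasDerivAt.comp (h₂ := Real.log) x (Real.hasDerivAt_log hs0.ne') hg
    have hl3 : HasDerivAt (fun x => Real.log (1 - x)) ((1 - x)⁻¹ * (0 - 1)) x :=
      (Real.hasDerivAt_log (by linarith : (0:ℝ) < 1 - x).ne').comp x
        ((hasDerivAt_const x (1:ℝ)).sub (hasDerivAt_id x))
    have hl4 : HasDerivAt Real.log x⁻¹ x := Real.hasDerivAt_log hx0.ne'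
    have h := ((hl1.sub hl2).mul_const (α - β)).sub ((hl3.sub hl4).const_mul |α - β|)
    have heq : ((1 - s)⁻¹ * (0 - (α - β)) - s⁻¹ * (α - β)) * (α - β)
          - |α - β| * ((1 - x)⁻¹ * (0 - 1) - x⁻¹)
        = |α - β| * (1 / (x * (1 - x))) - (α - β) ^ 2 * (1 / (s * (1 - s))) := by
      have e1 : s ≠ 0 := hs0.ne'
      have e2 : (1:ℝ) - s ≠ 0 := by linarith
      have e3 : x ≠ 0 := hx0.ne'
      have e4 : (1:ℝ) - x ≠ 0 := by linarith
      field_simp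
      ring
    rw [heq] at h
    exact h.hasDerivWithinAt
  · -- nonnegativity
    rw [interior_Icc]
    intro x hx
    obtain ⟨hx0, hx1⟩ := hx
    set s := α * x + β * (1 - x) with hs
    have hs0 : 0 < s := by nlinarith
    have hs1 : s < 1 := by nlinarith
    have key : |α - β| * (x * (1 - x)) ≤ s * (1 - s) := by
      rcases abs_cases (α - β) with ⟨he, _⟩ | ⟨he, _⟩
      · rw [he]
        have h1 : α * x ≤ s := by nlinarith
        have h2 : (1 - β) * (1 - x) ≤ 1 - s := by nlinarith
        have h3 : α * x * ((1 - β) * (1 - x)) ≤ s * (1 - s) :=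
          mul_le_mul h1 h2 (by nlinarith) hs0.le
        nlinarith [mul_nonneg (mul_nonneg hβ0.le (by linarith : (0:ℝ) ≤ 1 - α))
          (mul_nonneg hx0.le (by linarith : (0:ℝ) ≤ 1 - x))]
      · rw [he]
        have h1 : β * (1 - x) ≤ s := by nlinarith
        have h2 : (1 - α) * x ≤ 1 - s := by nlinarith
        have h3 : β * (1 - x) * ((1 - α) * x) ≤ s * (1 - s) :=
          mul_le_mul h1 h2 (by nlinarith) hs0.le
        nlinarith [mul_nonneg (mul_nonneg hα0.le (by linarith : (0:ℝ) ≤ 1 - β))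
          (mul_nonneg hx0.le (by linarith : (0:ℝ) ≤ 1 - x))]
    have hxx : 0 < x * (1 - x) := by nlinarith
    have hss : 0 < s * (1 - s) := by nlinarith
    have hle : (α - β) ^ 2 * (1 / (s * (1 - s))) ≤ |α - β| * (1 / (x * (1 - x))) := by
      rw [mul_one_div, mul_one_div, div_le_div_iff₀ hss hxx]
      nlinarith [mul_le_mul_of_nonneg_left key (abs_nonneg (α - β)), sq_abs (α - β)]
    linarith
end

section
/- Let x, u₁, u₂, v be such that f(u₁,v) = f(u₂,v) = x for a function f with X = f(U,V), and suppose p(u,v) achieves a maximum of I(U;Y)+I(V;Z)−I(U;V) over p(u,v|x) with all probabilities positive. Then the first-order optimality condition implies Σ_y p(y|x)² / p(u₂,y) ≥ p(u₁,v) / (p(u₂,v) p(u₁)), with equality only if p(y|x) = p(y|u₂) = p(y|u₁) for all y. -/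
open scoped BigOperators

/-- The joint distribution of `(U,V,Y,Z)` when `(U,V) ~ w`, `X = f(U,V)` and `Y`, `Z`
are produced by the channels `qY`, `qZ` applied to `X` (so `(U,V) → X → (Y,Z)` is a
Markov chain). -/
noncomputable def jointUVYZ {𝒰 𝒱 𝒳 𝒴 𝒵 : Type*}
    (w : 𝒰 × 𝒱 → ℝ) (f : 𝒰 × 𝒱 → 𝒳) (qY : 𝒳 → 𝒴 → ℝ) (qZ : 𝒳 → 𝒵 → ℝ) :
    𝒰 × 𝒱 × 𝒴 × 𝒵 → ℝ :=
  fun t => w (t.1, t.2.1) * qY (f (t.1, t.2.1)) t.2.2.1 * qZ (f (t.1, t.2.1)) t.2.2.2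

/-- The objective `I(U;Y) + I(V;Z) − I(U;V)` as a function of the input pmf `w` on
`(U,V)`, the deterministic map `X = f(U,V)` and the two channels. -/
noncomputable def objUVYZ {𝒰 𝒱 𝒳 𝒴 𝒵 : Type*} [Fintype 𝒰] [DecidableEq 𝒰]
    [Fintype 𝒱] [DecidableEq 𝒱] [Fintype 𝒴] [DecidableEq 𝒴] [Fintype 𝒵] [DecidableEq 𝒵]
    (w : 𝒰 × 𝒱 → ℝ) (f : 𝒰 × 𝒱 → 𝒳) (qY : 𝒳 → 𝒴 → ℝ) (qZ : 𝒳 → 𝒵 → ℝ) : ℝ :=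
  miOf (jointUVYZ w f qY qZ) (fun t => t.1) (fun t => t.2.2.1) +
    miOf (jointUVYZ w f qY qZ) (fun t => t.2.1) (fun t => t.2.2.2) -
    miOf (jointUVYZ w f qY qZ) (fun t => t.1) (fun t => t.2.1)

lemma gibbs_aux {𝒴 : Type*} [Fintype 𝒴] (q r : 𝒴 → ℝ)
    (hq : ∀ y, 0 < q y) (hq1 : ∑ y, q y = 1) (hr : ∀ y, 0 < r y) :
    (∑ y, q y * Real.log (r y) ≤ Real.log (∑ y, q y * r y)) ∧
    ((∑ y, q y * Real.log (r y)) = Real.log (∑ y, q y * r y) →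
      ∀ y, r y = ∑ y', q y' * r y') := by
  have hne : Nonempty 𝒴 := by
    by_contra h
    rw [not_nonempty_iff] at h
    simp [Finset.sum_of_isEmpty] at hq1
  set R := ∑ y', q y' * r y' with hR
  have hRpos : 0 < R := Finset.sum_pos (fun y _ => mul_pos (hq y) (hr y))
    Finset.univ_nonempty
  have hterm : ∀ y, q y * Real.log (r y / R) ≤ q y * (r y / R - 1) := fun y =>
    mul_le_mul_of_nonneg_left
      (Real.log_le_sub_one_of_pos (div_pos (hr y) hRpos)) (hq y).le
  have hsum0 : ∑ y, q y * (r y / R - 1) = 0 := by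
    have : ∑ y, q y * (r y / R - 1) = (∑ y, q y * r y) / R - ∑ y, q y := by
      rw [Finset.sum_div, ← Finset.sum_sub_distrib]
      exact Finset.sum_congr rfl fun y _ => by ring
    rw [this, ← hR, div_self hRpos.ne', hq1, sub_self]
  have hlogsplit : ∑ y, q y * Real.log (r y / R) =
      ∑ y, q y * Real.log (r y) - Real.log R := by
    have : ∑ y, q y * Real.log (r y / R) =
        ∑ y, (q y * Real.log (r y) - q y * Real.log R) := by
      refine Finset.sum_congr rfl fun y _ => ?_
      rw [Real.log_div (hr y).ne' hRpos.ne']; ring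
    rw [this, Finset.sum_sub_distrib, ← Finset.sum_mul, hq1, one_mul]
  have hmain : ∑ y, q y * Real.log (r y / R) ≤ 0 := by
    calc ∑ y, q y * Real.log (r y / R) ≤ ∑ y, q y * (r y / R - 1) :=
          Finset.sum_le_sum fun y _ => hterm y
      _ = 0 := hsum0
  constructor
  · linarith [hlogsplit ▸ hmain]
  · intro heq
    by_contra hcon
    push_neg at hcon
    obtain ⟨y₀, hy₀⟩ := hcon
    have hstrict : ∑ y, q y * Real.log (r y / R) < ∑ y, q y * (r y / R - 1) := by
      refine Finset.sum_lt_sum (fun y _ => hterm y) ⟨y₀, Finset.mem_univ _, ?_⟩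
      refine mul_lt_mul_of_pos_left ?_ (hq y₀)
      refine Real.log_lt_sub_one_of_pos (div_pos (hr y₀) hRpos) ?_
      exact fun h => hy₀ (by field_simp at h; linarith)
    rw [hsum0, hlogsplit] at hstrict
    linarith [heq]

lemma core_ineq {𝒴 : Type*} [Fintype 𝒴] (q p1 p2 : 𝒴 → ℝ) (a₁ a₂ b c : ℝ)
    (hq : ∀ y, 0 < q y) (hq1 : ∑ y, q y = 1)
    (hp1 : ∀ y, 0 < p1 y) (hp2 : ∀ y, 0 < p2 y)
    (hp1sum : ∑ y, p1 y = c) (hp2sum : ∑ y, p2 y = b)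
    (ha₁ : 0 < a₁) (ha₂ : 0 < a₂)
    (hD : Real.log a₁ - Real.log a₂ ≤ ∑ y, q y * (Real.log (p1 y) - Real.log (p2 y))) :
    (∑ y, q y ^ 2 / p2 y) ≥ a₁ / (a₂ * c) ∧
      ((∑ y, q y ^ 2 / p2 y) = a₁ / (a₂ * c) →
        ∀ y, q y = p2 y / b ∧ q y = p1 y / c) := by
  have hne : Nonempty 𝒴 := by
    by_contra h
    rw [not_nonempty_iff] at h
    simp at hq1
  have hc : 0 < c := hp1sum ▸ Finset.sum_pos (fun y _ => hp1 y) Finset.univ_nonempty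
  have hb : 0 < b := hp2sum ▸ Finset.sum_pos (fun y _ => hp2 y) Finset.univ_nonempty
  set S : ℝ := ∑ y, q y ^ 2 / p2 y with hSdef
  have hSpos : 0 < S :=
    Finset.sum_pos (fun y _ => div_pos (pow_pos (hq y) 2) (hp2 y)) Finset.univ_nonempty
  -- Gibbs with r = p1 / q
  have g2 := gibbs_aux q (fun y => p1 y / q y) hq hq1 (fun y => div_pos (hp1 y) (hq y))
  have hqr2 : ∑ y, q y * (p1 y / q y) = c := by
    rw [← hp1sum]
    exact Finset.sum_congr rfl fun y _ => mul_div_cancel₀ _ (hq y).ne'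
  -- Gibbs with r = q / p2
  have g3 := gibbs_aux q (fun y => q y / p2 y) hq hq1 (fun y => div_pos (hq y) (hp2 y))
  have hqr3 : ∑ y, q y * (q y / p2 y) = S := by
    rw [hSdef]
    exact Finset.sum_congr rfl fun y _ => by ring
  rw [hqr2] at g2
  rw [hqr3] at g3
  set L1 : ℝ := ∑ y, q y * Real.log (p1 y / q y) with hL1def
  set L3 : ℝ := ∑ y, q y * Real.log (q y / p2 y) with hL3def
  have hsplit : ∑ y, q y * (Real.log (p1 y) - Real.log (p2 y)) = L1 + L3 := by
    rw [hL1def, hL3def, ← Finset.sum_add_distrib]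
    refine Finset.sum_congr rfl fun y _ => ?_
    rw [Real.log_div (hp1 y).ne' (hq y).ne', Real.log_div (hq y).ne' (hp2 y).ne']
    ring
  have hchain : Real.log a₁ - Real.log a₂ ≤ Real.log c + Real.log S := by
    calc Real.log a₁ - Real.log a₂ ≤ L1 + L3 := by rw [← hsplit]; exact hD
      _ ≤ Real.log c + Real.log S := add_le_add g2.1 g3.1
  have hlogform : Real.log (a₁ / (a₂ * c)) = Real.log a₁ - Real.log a₂ - Real.log c := by
    rw [Real.log_div ha₁.ne' (mul_pos ha₂ hc).ne', Real.log_mul ha₂.ne' hc.ne']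
    ring
  constructor
  · have : Real.log (a₁ / (a₂ * c)) ≤ Real.log S := by rw [hlogform]; linarith
    exact (Real.log_le_log_iff (div_pos ha₁ (mul_pos ha₂ hc)) hSpos).mp this
  · intro heq
    have hlogS : Real.log S = Real.log a₁ - Real.log a₂ - Real.log c := by
      rw [heq]; exact hlogform
    have e2 : L1 = Real.log c := le_antisymm g2.1 (by linarith [g3.1, hD, hsplit ▸ hD])
    have e3 : L3 = Real.log S := le_antisymm g3.1 (by linarith [g2.1, hsplit ▸ hD])
    intro y
    have r2 : p1 y / q y = c := g2.2 e2 y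
    have r3 : q y / p2 y = S := g3.2 e3 y
    constructor
    · -- q y = p2 y / b, from q / p2 = S everywhere and S * b = 1
      have hq_eq : ∀ y', q y' = S * p2 y' := by
        intro y'
        have h' : q y' / p2 y' = S := g3.2 e3 y'
        exact (div_eq_iff (hp2 y').ne').mp h'
      have hSb : S * b = 1 := by
        rw [← hq1, ← hp2sum, Finset.mul_sum]
        exact (Finset.sum_congr rfl fun y' _ => (hq_eq y').symm)
      have : S = 1 / b := by field_simp at hSb ⊢; linarith
      rw [hq_eq y, this]
      field_simp
    · -- q y = p1 y / c, from p1 / q = c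
      have h2 : p1 y = c * q y := (div_eq_iff (hq y).ne').mp r2
      rw [h2, mul_comm, mul_div_assoc, div_self hc.ne', mul_one]


lemma hxlogx (a b : ℝ) (ha : 0 < a) :
    HasDerivAt (fun t => (a + t * b) * Real.log (a + t * b)) (b * (Real.log a + 1)) 0 := by
  have h1 : HasDerivAt (fun t : ℝ => a + t * b) b 0 := by
    simpa using ((hasDerivAt_id (0:ℝ)).mul_const b).const_add a
  have hne : a + 0 * b ≠ 0 := by simpa using ha.ne'
  have h3 := h1.fun_mul (h1.log hne)
  refine h3.congr_deriv ?_
  simp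
  field_simp


set_option linter.unusedSectionVars false
section Aux
variable {𝒰 𝒱 𝒳 𝒴 𝒵 : Type*} [Fintype 𝒰] [DecidableEq 𝒰] [Fintype 𝒱] [DecidableEq 𝒱]
    [Fintype 𝒳] [DecidableEq 𝒳] [Fintype 𝒴] [DecidableEq 𝒴] [Fintype 𝒵] [DecidableEq 𝒵]
    (w : 𝒰 × 𝒱 → ℝ) (f : 𝒰 × 𝒱 → 𝒳) (qY : 𝒳 → 𝒴 → ℝ) (qZ : 𝒳 → 𝒵 → ℝ)
    (hqY1 : ∀ x, ∑ y, qY x y = 1) (hqZ1 : ∀ x, ∑ z, qZ x z = 1)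

include hqY1 hqZ1 in
lemma probOf_U (u : 𝒰) :
    probOf (jointUVYZ w f qY qZ) (fun t => t.1) u = ∑ v', w (u, v') := by
  simp only [probOf, jointUVYZ, Fintype.sum_prod_type]
  simp only [Finset.sum_ite_irrel, Finset.sum_const_zero, Finset.sum_ite_eq',
    Finset.mem_univ, if_true]
  simp only [← Finset.mul_sum, hqZ1, hqY1, mul_one]

include hqY1 hqZ1 in
lemma probOf_V (v' : 𝒱) :
    probOf (jointUVYZ w f qY qZ) (fun t => t.2.1) v' = ∑ u, w (u, v') := by
  simp only [probOf, jointUVYZ, Fintype.sum_prod_type]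
  simp only [Finset.sum_ite_irrel, Finset.sum_const_zero, Finset.sum_ite_eq',
    Finset.mem_univ, if_true]
  simp only [← Finset.mul_sum, hqZ1, hqY1, mul_one]

include hqZ1 in
lemma probOf_Y (y : 𝒴) :
    probOf (jointUVYZ w f qY qZ) (fun t => t.2.2.1) y = ∑ p, w p * qY (f p) y := by
  simp only [probOf, jointUVYZ, Fintype.sum_prod_type]
  simp only [Finset.sum_ite_irrel, Finset.sum_const_zero, Finset.sum_ite_eq',
    Finset.mem_univ, if_true]
  simp only [← Finset.mul_sum, hqZ1, mul_one]

include hqY1 in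
lemma probOf_Z (z : 𝒵) :
    probOf (jointUVYZ w f qY qZ) (fun t => t.2.2.2) z = ∑ p, w p * qZ (f p) z := by
  simp only [probOf, jointUVYZ, Fintype.sum_prod_type]
  simp only [Finset.sum_ite_irrel, Finset.sum_const_zero, Finset.sum_ite_eq',
    Finset.mem_univ, if_true]
  simp only [mul_right_comm, ← Finset.sum_mul, ← Finset.mul_sum, hqY1, mul_one]

include hqZ1 in
lemma probOf_UY (u : 𝒰) (y : 𝒴) :
    probOf (jointUVYZ w f qY qZ) (fun t => (t.1, t.2.2.1)) (u, y) =
      ∑ v', w (u, v') * qY (f (u, v')) y := by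
  simp only [probOf, jointUVYZ, Fintype.sum_prod_type, Prod.mk.injEq, ite_and]
  simp only [Finset.sum_ite_irrel, Finset.sum_const_zero, Finset.sum_ite_eq',
    Finset.mem_univ, if_true]
  simp only [← Finset.mul_sum, hqZ1, mul_one]

include hqY1 in
lemma probOf_VZ (v' : 𝒱) (z : 𝒵) :
    probOf (jointUVYZ w f qY qZ) (fun t => (t.2.1, t.2.2.2)) (v', z) =
      ∑ u, w (u, v') * qZ (f (u, v')) z := by
  simp only [probOf, jointUVYZ, Fintype.sum_prod_type, Prod.mk.injEq, ite_and]
  simp only [Finset.sum_ite_irrel, Finset.sum_const_zero, Finset.sum_ite_eq',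
    Finset.mem_univ, if_true]
  simp only [mul_right_comm, ← Finset.sum_mul, ← Finset.mul_sum, hqY1, mul_one]

include hqY1 hqZ1 in
lemma probOf_UV (p' : 𝒰 × 𝒱) :
    probOf (jointUVYZ w f qY qZ) (fun t => (t.1, t.2.1)) p' = w p' := by
  obtain ⟨u, v'⟩ := p'
  simp only [probOf, jointUVYZ, Fintype.sum_prod_type, Prod.mk.injEq, ite_and]
  simp only [Finset.sum_ite_irrel, Finset.sum_const_zero, Finset.sum_ite_eq',
    Finset.mem_univ, if_true]
  simp only [← Finset.mul_sum, hqZ1, hqY1, mul_one]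

include hqY1 hqZ1 in
lemma obj_eq :
    objUVYZ w f qY qZ =
      (-∑ y, (∑ p, w p * qY (f p) y) * Real.log (∑ p, w p * qY (f p) y)) +
      (-∑ z, (∑ p, w p * qZ (f p) z) * Real.log (∑ p, w p * qZ (f p) z)) +
      (-∑ p : 𝒰 × 𝒱, w p * Real.log (w p)) -
      (-∑ u, ∑ y, (∑ v', w (u, v') * qY (f (u, v')) y) *
          Real.log (∑ v', w (u, v') * qY (f (u, v')) y)) -
      (-∑ v', ∑ z, (∑ u, w (u, v') * qZ (f (u, v')) z) *
          Real.log (∑ u, w (u, v') * qZ (f (u, v')) z)) := by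
  have eY : entOf (jointUVYZ w f qY qZ) (fun t => t.2.2.1) =
      -∑ y, (∑ p, w p * qY (f p) y) * Real.log (∑ p, w p * qY (f p) y) := by
    unfold entOf
    exact congrArg Neg.neg (Finset.sum_congr rfl fun y _ => by
      rw [probOf_Y w f qY qZ hqZ1])
  have eZ : entOf (jointUVYZ w f qY qZ) (fun t => t.2.2.2) =
      -∑ z, (∑ p, w p * qZ (f p) z) * Real.log (∑ p, w p * qZ (f p) z) := by
    unfold entOf
    exact congrArg Neg.neg (Finset.sum_congr rfl fun z _ => by
      rw [probOf_Z w f qY qZ hqY1])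
  have eUV : entOf (jointUVYZ w f qY qZ) (fun t => (t.1, t.2.1)) =
      -∑ p : 𝒰 × 𝒱, w p * Real.log (w p) := by
    unfold entOf
    exact congrArg Neg.neg (Finset.sum_congr rfl fun p _ => by
      rw [probOf_UV w f qY qZ hqY1 hqZ1])
  have eUY : entOf (jointUVYZ w f qY qZ) (fun t => ((t.1 : 𝒰), (t.2.2.1 : 𝒴))) =
      -∑ u, ∑ y, (∑ v', w (u, v') * qY (f (u, v')) y) *
          Real.log (∑ v', w (u, v') * qY (f (u, v')) y) := by
    unfold entOf
    rw [Fintype.sum_prod_type]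
    exact congrArg Neg.neg (Finset.sum_congr rfl fun u _ =>
      Finset.sum_congr rfl fun y _ => by rw [probOf_UY w f qY qZ hqZ1])
  have eVZ : entOf (jointUVYZ w f qY qZ) (fun t => ((t.2.1 : 𝒱), (t.2.2.2 : 𝒵))) =
      -∑ v', ∑ z, (∑ u, w (u, v') * qZ (f (u, v')) z) *
          Real.log (∑ u, w (u, v') * qZ (f (u, v')) z) := by
    unfold entOf
    rw [Fintype.sum_prod_type]
    exact congrArg Neg.neg (Finset.sum_congr rfl fun v' _ =>
      Finset.sum_congr rfl fun z _ => by rw [probOf_VZ w f qY qZ hqY1])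
  unfold objUVYZ miOf
  rw [eY, eZ, eUV, eUY, eVZ]
  ring
include hqY1 hqZ1 in
lemma deriv_cond
    (hw : IsPMF w) (hwpos : ∀ uv, 0 < w uv)
    (hqY : ∀ x y, 0 < qY x y)
    (hmax : ∀ w' : 𝒰 × 𝒱 → ℝ, IsPMF w' →
      (∀ x, (∑ uv, if f uv = x then w' uv else 0) = ∑ uv, if f uv = x then w uv else 0) →
      objUVYZ w' f qY qZ ≤ objUVYZ w f qY qZ)
    (u₁ u₂ : 𝒰) (v : 𝒱) (x : 𝒳) (h₁ : f (u₁, v) = x) (h₂ : f (u₂, v) = x)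
    (h12 : u₁ ≠ u₂) :
    Real.log (w (u₁, v)) - Real.log (w (u₂, v)) ≤
      ∑ y, qY x y * (Real.log (∑ v', w (u₁, v') * qY (f (u₁, v')) y) -
        Real.log (∑ v', w (u₂, v') * qY (f (u₂, v')) y)) := by
  classical
  set δ : 𝒰 × 𝒱 → ℝ :=
    fun p => (if p = (u₂, v) then (1:ℝ) else 0) - (if p = (u₁, v) then 1 else 0) with hδdef
  -- generic spike-sum computations
  have hδ : ∀ (c : (𝒰 × 𝒱) → ℝ), ∑ p, δ p * c p = c (u₂, v) - c (u₁, v) := by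
    intro c
    simp [hδdef, sub_mul, Finset.sum_sub_distrib, ite_mul, zero_mul, Finset.sum_ite_eq',
      Finset.mem_univ]
  have hδu : ∀ (u' : 𝒰) (c : 𝒱 → ℝ), ∑ v'', δ (u', v'') * c v'' =
      (if u' = u₂ then c v else 0) - (if u' = u₁ then c v else 0) := by
    intro u' c
    simp [hδdef, Prod.mk.injEq, sub_mul, Finset.sum_sub_distrib, ite_mul, zero_mul,
      ite_and, Finset.sum_ite_irrel, Finset.sum_const_zero, Finset.sum_ite_eq',
      Finset.mem_univ]
  have hδv : ∀ (v'' : 𝒱) (c : 𝒰 → ℝ), ∑ u', δ (u', v'') * c u' =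
      (if v'' = v then c u₂ else 0) - (if v'' = v then c u₁ else 0) := by
    intro v'' c
    simp [hδdef, Prod.mk.injEq, sub_mul, Finset.sum_sub_distrib, ite_mul, zero_mul,
      ite_and, Finset.sum_ite_irrel, Finset.sum_const_zero, Finset.sum_ite_eq',
      Finset.mem_univ]
  set dY : 𝒰 → 𝒴 → ℝ := fun u' y =>
    (if u' = u₂ then qY x y else 0) - (if u' = u₁ then qY x y else 0) with hdYdef
  -- marginals of the perturbed distribution
  have M2 : ∀ (t : ℝ) (u' : 𝒰) (y : 𝒴),
      ∑ v'', (w (u', v'') + t * δ (u', v'')) * qY (f (u', v'')) y =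
        (∑ v'', w (u', v'') * qY (f (u', v'')) y) + t * dY u' y := by
    intro t u' y
    have : ∀ v'', (w (u', v'') + t * δ (u', v'')) * qY (f (u', v'')) y =
        w (u', v'') * qY (f (u', v'')) y + t * (δ (u', v'') * qY (f (u', v'')) y) := by
      intro v''; ring
    rw [Finset.sum_congr rfl fun v'' _ => this v'', Finset.sum_add_distrib,
      ← Finset.mul_sum, hδu u' (fun v'' => qY (f (u', v'')) y)]
    congr 2
    rw [hdYdef]
    congr 1 <;> (split_ifs with h <;> [skip; rfl]) <;> subst h
    · rw [h₂]
    · rw [h₁]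
  have M3 : ∀ (t : ℝ) (y : 𝒴),
      ∑ p, (w p + t * δ p) * qY (f p) y = ∑ p, w p * qY (f p) y := by
    intro t y
    have : ∀ p, (w p + t * δ p) * qY (f p) y =
        w p * qY (f p) y + t * (δ p * qY (f p) y) := fun p => by ring
    rw [Finset.sum_congr rfl fun p _ => this p, Finset.sum_add_distrib, ← Finset.mul_sum,
      hδ (fun p => qY (f p) y), h₁, h₂, sub_self, mul_zero, add_zero]
  have M4 : ∀ (t : ℝ) (z : 𝒵),
      ∑ p, (w p + t * δ p) * qZ (f p) z = ∑ p, w p * qZ (f p) z := by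
    intro t z
    have : ∀ p, (w p + t * δ p) * qZ (f p) z =
        w p * qZ (f p) z + t * (δ p * qZ (f p) z) := fun p => by ring
    rw [Finset.sum_congr rfl fun p _ => this p, Finset.sum_add_distrib, ← Finset.mul_sum,
      hδ (fun p => qZ (f p) z), h₁, h₂, sub_self, mul_zero, add_zero]
  have M5 : ∀ (t : ℝ) (v'' : 𝒱) (z : 𝒵),
      ∑ u', (w (u', v'') + t * δ (u', v'')) * qZ (f (u', v'')) z =
        ∑ u', w (u', v'') * qZ (f (u', v'')) z := by
    intro t v'' z
    have : ∀ u', (w (u', v'') + t * δ (u', v'')) * qZ (f (u', v'')) z =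
        w (u', v'') * qZ (f (u', v'')) z + t * (δ (u', v'') * qZ (f (u', v'')) z) :=
      fun u' => by ring
    rw [Finset.sum_congr rfl fun u' _ => this u', Finset.sum_add_distrib, ← Finset.mul_sum,
      hδv v'' (fun u' => qZ (f (u', v'')) z)]
    split_ifs with h
    · subst h; rw [h₁, h₂, sub_self, mul_zero, add_zero]
    · rw [sub_self, mul_zero, add_zero]
  set C0 : ℝ :=
    (-∑ y, (∑ p, w p * qY (f p) y) * Real.log (∑ p, w p * qY (f p) y)) +
    (-∑ z, (∑ p, w p * qZ (f p) z) * Real.log (∑ p, w p * qZ (f p) z)) +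
    (∑ v'', ∑ z, (∑ u', w (u', v'') * qZ (f (u', v'')) z) *
        Real.log (∑ u', w (u', v'') * qZ (f (u', v'')) z)) with hC0def
  have hobj : ∀ t : ℝ, objUVYZ (fun p => w p + t * δ p) f qY qZ =
      C0 + ((-∑ p : 𝒰 × 𝒱, (w p + t * δ p) * Real.log (w p + t * δ p)) +
        (∑ u', ∑ y, ((∑ v'', w (u', v'') * qY (f (u', v'')) y) + t * dY u' y) *
          Real.log ((∑ v'', w (u', v'') * qY (f (u', v'')) y) + t * dY u' y))) := by
    intro t
    rw [obj_eq (fun p => w p + t * δ p) f qY qZ hqY1 hqZ1]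
    simp only [M2 t, M3 t, M4 t, M5 t]
    rw [hC0def]; ring
  -- nonempty instances
  have hV : Nonempty 𝒱 := by
    by_contra h
    rw [not_nonempty_iff] at h
    have := hw.2
    simp [Finset.univ_eq_empty] at this
  have hSpos : ∀ (u' : 𝒰) (y : 𝒴), 0 < ∑ v'', w (u', v'') * qY (f (u', v'')) y :=
    fun u' y => Finset.sum_pos (fun v'' _ => mul_pos (hwpos _) (hqY _ _)) Finset.univ_nonempty
  -- the derivative
  set D : ℝ :=
    (-∑ p : 𝒰 × 𝒱, δ p * (Real.log (w p) + 1)) +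
      (∑ u', ∑ y, dY u' y *
        (Real.log (∑ v'', w (u', v'') * qY (f (u', v'')) y) + 1)) with hDdef
  have hg : HasDerivAt (fun t => objUVYZ (fun p => w p + t * δ p) f qY qZ) D 0 := by
    have heq : (fun t => objUVYZ (fun p => w p + t * δ p) f qY qZ) =
        fun t => C0 + ((-∑ p : 𝒰 × 𝒱, (w p + t * δ p) * Real.log (w p + t * δ p)) +
          (∑ u', ∑ y, ((∑ v'', w (u', v'') * qY (f (u', v'')) y) + t * dY u' y) *
            Real.log ((∑ v'', w (u', v'') * qY (f (u', v'')) y) + t * dY u' y))) :=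
      funext hobj
    rw [heq, hDdef]
    have hΦ : HasDerivAt
        (fun t => ∑ p : 𝒰 × 𝒱, (w p + t * δ p) * Real.log (w p + t * δ p))
        (∑ p : 𝒰 × 𝒱, δ p * (Real.log (w p) + 1)) 0 :=
      HasDerivAt.fun_sum (fun p _ => hxlogx (w p) (δ p) (hwpos p))
    have hΨ : HasDerivAt
        (fun t => ∑ u', ∑ y, ((∑ v'', w (u', v'') * qY (f (u', v'')) y) + t * dY u' y) *
          Real.log ((∑ v'', w (u', v'') * qY (f (u', v'')) y) + t * dY u' y))
        (∑ u', ∑ y, dY u' y *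
          (Real.log (∑ v'', w (u', v'') * qY (f (u', v'')) y) + 1)) 0 :=
      HasDerivAt.fun_sum (fun u' _ => HasDerivAt.fun_sum (fun y _ => hxlogx _ _ (hSpos u' y)))
    exact (hΦ.neg.add hΨ).const_add C0
  -- local maximality
  have hδsum1 : ∑ p : 𝒰 × 𝒱, δ p = 0 := by
    have := hδ (fun _ => 1)
    simpa using this
  have hne12 : ((u₁ : 𝒰), (v : 𝒱)) ≠ (u₂, v) := by
    intro h
    exact h12 (congrArg Prod.fst h)
  have hδ1 : δ (u₁, v) = -1 := by simp [hδdef, hne12]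
  have hδ2 : δ (u₂, v) = 1 := by simp [hδdef, Ne.symm hne12]
  have hloc : IsLocalMax (fun t => objUVYZ (fun p => w p + t * δ p) f qY qZ) 0 := by
    have hε : 0 < min (w (u₁, v)) (w (u₂, v)) :=
      lt_min (hwpos _) (hwpos _)
    filter_upwards [Metric.ball_mem_nhds (0:ℝ) hε] with t ht
    rw [Metric.mem_ball, Real.dist_eq, sub_zero] at ht
    have habs : |t| < min (w (u₁, v)) (w (u₂, v)) := ht
    have hpmf : IsPMF (fun p => w p + t * δ p) := by
      constructor
      · intro p
        by_cases hp1 : p = (u₁, v)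
        · subst hp1
          simp only [hδ1]
          have : |t| < w (u₁, v) := lt_of_lt_of_le habs (min_le_left _ _)
          have := abs_lt.mp this
          linarith
        · by_cases hp2 : p = (u₂, v)
          · subst hp2
            simp only [hδ2]
            have : |t| < w (u₂, v) := lt_of_lt_of_le habs (min_le_right _ _)
            have := abs_lt.mp this
            linarith
          · have : δ p = 0 := by simp [hδdef, hp1, hp2]
            simp only [this, mul_zero, add_zero]
            exact (hwpos p).le
      · have : ∑ p : 𝒰 × 𝒱, (w p + t * δ p) =
            (∑ p : 𝒰 × 𝒱, w p) + t * ∑ p : 𝒰 × 𝒱, δ p := by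
          rw [Finset.sum_add_distrib, Finset.mul_sum]
        rw [this, hδsum1, hw.2]
        ring
    have hmarg : ∀ x', (∑ p : 𝒰 × 𝒱, if f p = x' then w p + t * δ p else 0) =
        ∑ p : 𝒰 × 𝒱, if f p = x' then w p else 0 := by
      intro x'
      have split : ∀ p : 𝒰 × 𝒱, (if f p = x' then w p + t * δ p else 0) =
          (if f p = x' then w p else 0) + t * (δ p * (if f p = x' then 1 else 0)) := by
        intro p; split_ifs <;> ring
      rw [Finset.sum_congr rfl fun p _ => split p, Finset.sum_add_distrib,
        ← Finset.mul_sum, hδ (fun p => if f p = x' then 1 else 0), h₁, h₂, sub_self,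
        mul_zero, add_zero]
    have h0 : (fun p : 𝒰 × 𝒱 => w p + 0 * δ p) = w := by
      funext p; ring
    calc objUVYZ (fun p => w p + t * δ p) f qY qZ ≤ objUVYZ w f qY qZ :=
          hmax _ hpmf hmarg
      _ = objUVYZ (fun p => w p + 0 * δ p) f qY qZ := by rw [h0]
  have hD0 : D = 0 := hloc.hasDerivAt_eq_zero hg
  -- extract the inequality
  have c1 : ∑ p : 𝒰 × 𝒱, δ p * (Real.log (w p) + 1) =
      (Real.log (w (u₂, v)) + 1) - (Real.log (w (u₁, v)) + 1) :=
    hδ (fun p => Real.log (w p) + 1)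
  have c2 : ∑ u', ∑ y, dY u' y *
      (Real.log (∑ v'', w (u', v'') * qY (f (u', v'')) y) + 1) =
      (∑ y, qY x y * (Real.log (∑ v'', w (u₂, v'') * qY (f (u₂, v'')) y) + 1)) -
      (∑ y, qY x y * (Real.log (∑ v'', w (u₁, v'') * qY (f (u₁, v'')) y) + 1)) := by
    simp [hdYdef, sub_mul, Finset.sum_sub_distrib, ite_mul, zero_mul,
      Finset.sum_ite_irrel, Finset.sum_const_zero, Finset.sum_ite_eq', Finset.mem_univ]
  have expand : ∑ y, qY x y * (Real.log (∑ v', w (u₁, v') * qY (f (u₁, v')) y) -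
      Real.log (∑ v', w (u₂, v') * qY (f (u₂, v')) y)) =
      (∑ y, qY x y * (Real.log (∑ v'', w (u₁, v'') * qY (f (u₁, v'')) y) + 1)) -
      (∑ y, qY x y * (Real.log (∑ v'', w (u₂, v'') * qY (f (u₂, v'')) y) + 1)) := by
    rw [← Finset.sum_sub_distrib]
    exact Finset.sum_congr rfl fun y _ => by ring
  rw [hDdef] at hD0
  rw [expand]
  linarith [hD0, c1, c2]
end Aux

/-- Lemma `le:kld`: take arbitrary `u₁, u₂, v, x` with `f(u₁,v) = f(u₂,v) = x`.  Then a
pmf `w` on `(U,V)` with all entries positive which maximizes `I(U;Y)+I(V;Z)−I(U;V)`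
over all `p(u,v|x)` (i.e. over all pmfs `w'` inducing the same marginal on
`X = f(U,V)`) must satisfy `Σ_y p(y|x)² / p(u₂,y) ≥ p(u₁,v) / (p(u₂,v) p(u₁))`,
with equality only if `p(y|x) = p(y|u₂) = p(y|u₁)` for all `y`. -/
theorem first_derivative_ineq_of_maximizer
    {𝒰 𝒱 𝒳 𝒴 𝒵 : Type*} [Fintype 𝒰] [DecidableEq 𝒰] [Fintype 𝒱] [DecidableEq 𝒱]
    [Fintype 𝒳] [DecidableEq 𝒳] [Fintype 𝒴] [DecidableEq 𝒴] [Fintype 𝒵] [DecidableEq 𝒵]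
    (w : 𝒰 × 𝒱 → ℝ) (hw : IsPMF w) (hwpos : ∀ uv, 0 < w uv)
    (f : 𝒰 × 𝒱 → 𝒳)
    (qY : 𝒳 → 𝒴 → ℝ) (hqY : ∀ x y, 0 < qY x y) (hqY1 : ∀ x, ∑ y, qY x y = 1)
    (qZ : 𝒳 → 𝒵 → ℝ) (hqZ : ∀ x z, 0 < qZ x z) (hqZ1 : ∀ x, ∑ z, qZ x z = 1)
    (hmax : ∀ w' : 𝒰 × 𝒱 → ℝ, IsPMF w' →
      (∀ x, (∑ uv, if f uv = x then w' uv else 0) = ∑ uv, if f uv = x then w uv else 0) →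
      objUVYZ w' f qY qZ ≤ objUVYZ w f qY qZ)
    (u₁ u₂ : 𝒰) (v : 𝒱) (x : 𝒳) (h₁ : f (u₁, v) = x) (h₂ : f (u₂, v) = x) :
    -- notation: `pUY u y = p(U = u, Y = y)` and `pU u = p(U = u)`
    (∑ y, (qY x y) ^ 2 / (∑ v', w (u₂, v') * qY (f (u₂, v')) y)) ≥
        w (u₁, v) / (w (u₂, v) * (∑ v', w (u₁, v'))) ∧
      ((∑ y, (qY x y) ^ 2 / (∑ v', w (u₂, v') * qY (f (u₂, v')) y)) =
          w (u₁, v) / (w (u₂, v) * (∑ v', w (u₁, v'))) →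
        ∀ y, qY x y = (∑ v', w (u₂, v') * qY (f (u₂, v')) y) / (∑ v', w (u₂, v')) ∧
          qY x y = (∑ v', w (u₁, v') * qY (f (u₁, v')) y) / (∑ v', w (u₁, v'))) := by
  classical
  have hV : Nonempty 𝒱 := by
    by_contra h
    rw [not_nonempty_iff] at h
    have := hw.2
    simp [Finset.univ_eq_empty] at this
  have hY : Nonempty 𝒴 := by
    by_contra h
    rw [not_nonempty_iff] at h
    have := hqY1 x
    simp [Finset.univ_eq_empty] at this
  have hSpos1 : ∀ y, 0 < ∑ v', w (u₁, v') * qY (f (u₁, v')) y := fun y =>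
    Finset.sum_pos (fun v' _ => mul_pos (hwpos _) (hqY _ _)) Finset.univ_nonempty
  have hSpos2 : ∀ y, 0 < ∑ v', w (u₂, v') * qY (f (u₂, v')) y := fun y =>
    Finset.sum_pos (fun v' _ => mul_pos (hwpos _) (hqY _ _)) Finset.univ_nonempty
  have hp1sum : ∑ y, (∑ v', w (u₁, v') * qY (f (u₁, v')) y) = ∑ v', w (u₁, v') := by
    rw [Finset.sum_comm]
    exact Finset.sum_congr rfl fun v' _ => by rw [← Finset.mul_sum, hqY1, mul_one]
  have hp2sum : ∑ y, (∑ v', w (u₂, v') * qY (f (u₂, v')) y) = ∑ v', w (u₂, v') := by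
    rw [Finset.sum_comm]
    exact Finset.sum_congr rfl fun v' _ => by rw [← Finset.mul_sum, hqY1, mul_one]
  have hD : Real.log (w (u₁, v)) - Real.log (w (u₂, v)) ≤
      ∑ y, qY x y * (Real.log (∑ v', w (u₁, v') * qY (f (u₁, v')) y) -
        Real.log (∑ v', w (u₂, v') * qY (f (u₂, v')) y)) := by
    by_cases h12 : u₁ = u₂
    · subst h12; simp
    · exact deriv_cond w f qY qZ hqY1 hqZ1 hw hwpos hqY hmax u₁ u₂ v x h₁ h₂ h12
  exact core_ineq (fun y => qY x y)
    (fun y => ∑ v', w (u₁, v') * qY (f (u₁, v')) y)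
    (fun y => ∑ v', w (u₂, v') * qY (f (u₂, v')) y)
    (w (u₁, v)) (w (u₂, v)) (∑ v', w (u₂, v')) (∑ v', w (u₁, v'))
    (hqY x) (hqY1 x) hSpos1 hSpos2 hp1sum hp2sum (hwpos _) (hwpos _) hD
end

section
/- For any random variables L, U, V, Y, Z on a finite probability space with L a function of (U,V), the second-order optimality condition at a local maximizer of I(U;Y)+I(V;Z)−I(U;V) under multiplicative perturbation p_ε(u,v,x) = p(u,v,x)(1+εL) with E[L|X]=0 reads: E[E(L|U,Y)²] + E[E(L|V,Z)²] − E[E(L|U,V)²] ≤ 0. -/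
open scoped BigOperators

/-- `E[E(L|W)²]`: the second moment of the conditional expectation of `L` given `W`,
for a pmf `p` on a finite space, written as `Σ_c (Σ_{t : W t = c} p t · L t)² / P(W = c)`. -/
noncomputable def condExpSq {Ω γ : Type*} [Fintype Ω] [Fintype γ] [DecidableEq γ]
    (p : Ω → ℝ) (L : Ω → ℝ) (W : Ω → γ) : ℝ :=
  ∑ c, (∑ t, if W t = c then p t * L t else 0) ^ 2 / probOf p W c

/- ----------------------------------------------------------------------
   Auxiliary lemmas
---------------------------------------------------------------------- -/

open Real Filter

/-- Second derivative test: if `f` is differentiable near `0`, its derivative `f'`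
has derivative `c` at `0`, and `0` is a local max of `f`, then `c ≤ 0`. -/
lemma aux_second_deriv_test {f f' : ℝ → ℝ} {c : ℝ}
    (hf : ∀ᶠ x in nhds (0:ℝ), HasDerivAt f (f' x) x)
    (h2 : HasDerivAt f' c 0) (hmax : IsLocalMax f 0) : c ≤ 0 := by
  by_contra hc
  push_neg at hc
  have hd0 : f' 0 = 0 := by
    have h := hf.self_of_nhds
    have h2' := hmax.deriv_eq_zero
    rwa [h.deriv] at h2'
  have hslope : ∀ᶠ x in nhdsWithin (0:ℝ) {(0:ℝ)}ᶜ, c/2 < slope f' 0 x := by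
    have := hasDerivAt_iff_tendsto_slope.1 h2
    exact this.eventually (eventually_gt_nhds (by linarith))
  rw [eventually_nhdsWithin_iff] at hslope
  have H : ∀ᶠ x in nhds (0:ℝ),
      HasDerivAt f (f' x) x ∧ f x ≤ f 0 ∧ (x ∈ ({(0:ℝ)}ᶜ : Set ℝ) → c/2 < slope f' 0 x) :=
    hf.and (hmax.and hslope)
  rcases Metric.eventually_nhds_iff.1 H with ⟨r, hr, hH⟩
  have hmem : ∀ x : ℝ, |x| < r → HasDerivAt f (f' x) x ∧ f x ≤ f 0 ∧
      (x ≠ 0 → c/2 < slope f' 0 x) := by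
    intro x hx
    have := hH (y := x) (by simpa [Real.dist_eq] using hx)
    exact ⟨this.1, this.2.1, fun h => this.2.2 h⟩
  have hfpos : ∀ x : ℝ, 0 < x → x < r → 0 < f' x := by
    intro x hx0 hxr
    have h := (hmem x (by rwa [abs_of_pos hx0])).2.2 (ne_of_gt hx0)
    rw [slope_def_field, hd0, sub_zero, sub_zero] at h
    have h2 : c/2 * x < f' x := (lt_div_iff₀ hx0).1 h
    nlinarith
  have habs : ∀ x : ℝ, x ∈ Set.Icc (0:ℝ) (r/2) → |x| < r := by
    intro x hx
    rw [abs_of_nonneg hx.1]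
    linarith [hx.2]
  have hmono : StrictMonoOn f (Set.Icc (0:ℝ) (r/2)) := by
    apply strictMonoOn_of_deriv_pos (convex_Icc _ _)
    · intro x hx
      exact ((hmem x (habs x hx)).1).continuousAt.continuousWithinAt
    · intro x hx
      rw [interior_Icc] at hx
      rw [((hmem x (habs x ⟨le_of_lt hx.1, le_of_lt hx.2⟩)).1).deriv]
      exact hfpos x hx.1 (by linarith [hx.2])
  have h1 : f 0 < f (r/2) :=
    hmono (Set.mem_Icc.2 ⟨le_refl _, by linarith⟩)
      (Set.mem_Icc.2 ⟨by linarith, le_refl _⟩) (by linarith)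
  have h2 : f (r/2) ≤ f 0 := (hmem (r/2) (by rw [abs_of_pos (by linarith)]; linarith)).2.1
  linarith

lemma aux_probOf_perturb {Ω γ : Type*} [Fintype Ω] [DecidableEq γ]
    (p L : Ω → ℝ) (W : Ω → γ) (ε : ℝ) (w : γ) :
    probOf (fun t => p t * (1 + ε * L t)) W w
      = probOf p W w + ε * ∑ t, if W t = w then p t * L t else 0 := by
  unfold probOf
  rw [Finset.mul_sum, ← Finset.sum_add_distrib]
  refine Finset.sum_congr rfl fun t _ => ?_
  by_cases h : W t = w
  · simp [h]; ring
  · simp [h]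

lemma aux_hasDerivAt_ent_term (a b ε : ℝ) (h : a + ε * b ≠ 0) :
    HasDerivAt (fun e => (a + e * b) * Real.log (a + e * b))
      (b * (Real.log (a + ε * b) + 1)) ε := by
  have h1 : HasDerivAt (fun e : ℝ => a + e * b) b ε := by
    simpa using ((hasDerivAt_id ε).mul_const b).const_add a
  have h2 : HasDerivAt (fun e : ℝ => Real.log (a + e * b)) ((a + ε * b)⁻¹ * b) ε := by
    have := (Real.hasDerivAt_log h).comp ε h1; exact this
  have := h1.mul h2
  exact this.congr_deriv (by rw [mul_inv_cancel_left₀ h]; ring)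

lemma aux_hasDerivAt_ent_term' (a b ε : ℝ) (h : a + ε * b ≠ 0) :
    HasDerivAt (fun e => b * (Real.log (a + e * b) + 1)) (b ^ 2 / (a + ε * b)) ε := by
  have h1 : HasDerivAt (fun e : ℝ => a + e * b) b ε := by
    simpa using ((hasDerivAt_id ε).mul_const b).const_add a
  have h2 : HasDerivAt (fun e : ℝ => Real.log (a + e * b)) ((a + ε * b)⁻¹ * b) ε := by
    have := (Real.hasDerivAt_log h).comp ε h1; exact this
  have := (h2.add_const 1).const_mul b
  exact this.congr_deriv (by rw [div_eq_mul_inv]; ring)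

lemma aux_probOf_pos {Ω γ : Type*} [Fintype Ω] [DecidableEq γ]
    {p : Ω → ℝ} (hp : ∀ t, 0 < p t) {W : Ω → γ} (hW : Function.Surjective W) (w : γ) :
    0 < probOf p W w := by
  obtain ⟨t, ht⟩ := hW w
  have h1 : (if W t = w then p t else 0) ≤ probOf p W w := by
    apply Finset.single_le_sum (f := fun t => if W t = w then p t else 0)
    · intro i _
      by_cases h : W i = w <;> simp [h, (hp i).le]
    · exact Finset.mem_univ t
  rw [if_pos ht] at h1
  exact lt_of_lt_of_le (hp t) h1

/-- The entropy of `W` under the perturbed measure is differentiable near `0`, with an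
explicit first derivative whose derivative at `0` is `-E[E(L|W)²]`. -/
lemma aux_key_deriv {Ω γ : Type*} [Fintype Ω] [Fintype γ] [DecidableEq γ]
    (p L : Ω → ℝ) (W : Ω → γ) (hpos : ∀ w, 0 < probOf p W w) :
    ∃ d : ℝ → ℝ,
      (∀ᶠ ε in nhds (0:ℝ),
        HasDerivAt (fun e => entOf (fun t => p t * (1 + e * L t)) W) (d ε) ε)
      ∧ HasDerivAt d (-condExpSq p L W) 0 := by
  set A : γ → ℝ := fun w => probOf p W w with hA
  set B : γ → ℝ := fun w => ∑ t, if W t = w then p t * L t else 0 with hB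
  have hfun : (fun e => entOf (fun t => p t * (1 + e * L t)) W)
      = fun e => -∑ w, (A w + e * B w) * Real.log (A w + e * B w) := by
    funext e
    unfold entOf
    simp only [aux_probOf_perturb, hA, hB]
  refine ⟨fun ε => -∑ w, B w * (Real.log (A w + ε * B w) + 1), ?_, ?_⟩
  · have hev : ∀ᶠ ε in nhds (0:ℝ), ∀ w, 0 < A w + ε * B w := by
      rw [Filter.eventually_all]
      intro w
      have hc : ContinuousAt (fun ε : ℝ => A w + ε * B w) 0 := by fun_prop
      have h0 : (0:ℝ) < A w + 0 * B w := by simpa using hpos w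
      exact hc.eventually (eventually_gt_nhds h0)
    refine hev.mono fun ε hε => ?_
    rw [hfun]
    exact (HasDerivAt.fun_sum fun w _ =>
      aux_hasDerivAt_ent_term (A w) (B w) ε (ne_of_gt (hε w))).neg
  · have : HasDerivAt (fun ε => -∑ w, B w * (Real.log (A w + ε * B w) + 1))
        (-∑ w, (B w) ^ 2 / (A w + 0 * B w)) 0 :=
      (HasDerivAt.fun_sum fun w _ =>
        aux_hasDerivAt_ent_term' (A w) (B w) 0 (ne_of_gt (by simpa using hpos w))).neg
    convert this using 2
    unfold condExpSq
    simp [hA, hB]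

lemma aux_sum_eq_of_eq_single {A : Type*} [Fintype A] (u : A) (f : A → ℝ)
    (h0 : ∀ a, a ≠ u → f a = 0) : ∑ a, f a = f u :=
  Finset.sum_eq_single_of_mem u (Finset.mem_univ u) (fun b _ hb => h0 b hb)

section Expand

variable {𝒰 𝒱 𝒳 𝒴 𝒵 : Type*} [Fintype 𝒰] [DecidableEq 𝒰] [Fintype 𝒱] [DecidableEq 𝒱]
    [Fintype 𝒳] [DecidableEq 𝒳] [Fintype 𝒴] [DecidableEq 𝒴] [Fintype 𝒵] [DecidableEq 𝒵]
    (p : 𝒰 × 𝒱 × 𝒳 × 𝒴 × 𝒵 → ℝ) (L : 𝒰 × 𝒱 → ℝ)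

lemma aux_exp1 (u : 𝒰) (v : 𝒱) (x : 𝒳) :
    probOf p (fun t => (t.1, t.2.1, t.2.2.1)) (u, v, x) = ∑ y, ∑ z, p (u, v, x, y, z) := by
  unfold probOf
  simp only [Fintype.sum_prod_type]
  rw [aux_sum_eq_of_eq_single u]
  · rw [aux_sum_eq_of_eq_single v]
    · rw [aux_sum_eq_of_eq_single x]
      · exact Finset.sum_congr rfl fun d _ => Finset.sum_congr rfl fun e _ => if_pos rfl
      · intro c hc
        refine Finset.sum_eq_zero fun d _ => Finset.sum_eq_zero fun e _ => if_neg ?_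
        exact fun h => hc (congrArg (fun q => q.2.2) h)
    · intro b hb
      refine Finset.sum_eq_zero fun c _ => Finset.sum_eq_zero fun d _ =>
        Finset.sum_eq_zero fun e _ => if_neg ?_
      exact fun h => hb (congrArg (fun q => q.2.1) h)
  · intro a ha
    refine Finset.sum_eq_zero fun b _ => Finset.sum_eq_zero fun c _ =>
      Finset.sum_eq_zero fun d _ => Finset.sum_eq_zero fun e _ => if_neg ?_
    exact fun h => ha (congrArg (fun q => q.1) h)

lemma aux_exp2 (x : 𝒳) (y : 𝒴) (z : 𝒵) :
    probOf p (fun t => (t.2.2.1, t.2.2.2.1, t.2.2.2.2)) (x, y, z)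
      = ∑ u, ∑ v, p (u, v, x, y, z) := by
  unfold probOf
  simp only [Fintype.sum_prod_type]
  refine Finset.sum_congr rfl fun a _ => Finset.sum_congr rfl fun b _ => ?_
  rw [aux_sum_eq_of_eq_single x]
  · rw [aux_sum_eq_of_eq_single y]
    · rw [aux_sum_eq_of_eq_single z]
      · exact if_pos rfl
      · exact fun e he => if_neg fun h => he (congrArg (fun q => q.2.2) h)
    · intro d hd
      exact Finset.sum_eq_zero fun e _ => if_neg fun h => hd (congrArg (fun q => q.2.1) h)
  · intro c hc
    refine Finset.sum_eq_zero fun d _ => Finset.sum_eq_zero fun e _ => if_neg ?_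
    exact fun h => hc (congrArg (fun q => q.1) h)

lemma aux_expX (x : 𝒳) :
    (∑ t, if t.2.2.1 = x then p t * L (t.1, t.2.1) else 0)
      = ∑ u, ∑ v, ∑ y, ∑ z, p (u, v, x, y, z) * L (u, v) := by
  simp only [Fintype.sum_prod_type]
  refine Finset.sum_congr rfl fun a _ => Finset.sum_congr rfl fun b _ => ?_
  rw [aux_sum_eq_of_eq_single x]
  · exact Finset.sum_congr rfl fun d _ => Finset.sum_congr rfl fun e _ => if_pos rfl
  · intro c hc
    exact Finset.sum_eq_zero fun d _ => Finset.sum_eq_zero fun e _ => if_neg hc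

lemma aux_expY (y : 𝒴) :
    (∑ t, if t.2.2.2.1 = y then p t * L (t.1, t.2.1) else 0)
      = ∑ u, ∑ v, ∑ x, ∑ z, p (u, v, x, y, z) * L (u, v) := by
  simp only [Fintype.sum_prod_type]
  refine Finset.sum_congr rfl fun a _ => Finset.sum_congr rfl fun b _ =>
    Finset.sum_congr rfl fun c _ => ?_
  rw [aux_sum_eq_of_eq_single y]
  · exact Finset.sum_congr rfl fun e _ => if_pos rfl
  · intro d hd
    exact Finset.sum_eq_zero fun e _ => if_neg hd

lemma aux_expZ (z : 𝒵) :
    (∑ t, if t.2.2.2.2 = z then p t * L (t.1, t.2.1) else 0)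
      = ∑ u, ∑ v, ∑ x, ∑ y, p (u, v, x, y, z) * L (u, v) := by
  simp only [Fintype.sum_prod_type]
  refine Finset.sum_congr rfl fun a _ => Finset.sum_congr rfl fun b _ =>
    Finset.sum_congr rfl fun c _ => Finset.sum_congr rfl fun d _ => ?_
  rw [aux_sum_eq_of_eq_single z]
  · exact if_pos rfl
  · exact fun e he => if_neg he

lemma aux_expid (q : 𝒰 × 𝒱 × 𝒳 × 𝒴 × 𝒵) :
    probOf p (fun t => (t.1, t.2.1, t.2.2.1, t.2.2.2.1, t.2.2.2.2)) q = p q := by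
  unfold probOf
  rw [aux_sum_eq_of_eq_single q]
  · exact if_pos rfl
  · exact fun t ht => if_neg fun h => ht h

end Expand

/-- let `p` be a (positive) joint pmf of `(U,V,X,Y,Z)` such that
`(U,V) → X → (Y,Z)` is a Markov chain, and let `L` be a function of `(U,V)` with
`E[L|X] = 0` (so the multiplicative perturbation `p_ε = p·(1+εL)` preserves `p(x)`).
If `ε = 0` is a local maximum of `ε ↦ I(U;Y) + I(V;Z) − I(U;V)` computed at `p_ε`,
then the second-order optimality condition
`E[E(L|U,Y)²] + E[E(L|V,Z)²] − E[E(L|U,V)²] ≤ 0` holds. -/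
theorem second_order_condition_at_local_max
    {𝒰 𝒱 𝒳 𝒴 𝒵 : Type*} [Fintype 𝒰] [DecidableEq 𝒰] [Fintype 𝒱] [DecidableEq 𝒱]
    [Fintype 𝒳] [DecidableEq 𝒳] [Fintype 𝒴] [DecidableEq 𝒴] [Fintype 𝒵] [DecidableEq 𝒵]
    (p : 𝒰 × 𝒱 × 𝒳 × 𝒴 × 𝒵 → ℝ) (hpos : ∀ t, 0 < p t) (hsum : ∑ t, p t = 1)
    (hM : MarkovUVXYZ p (fun t => t.1) (fun t => t.2.1) (fun t => t.2.2.1)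
      (fun t => t.2.2.2.1) (fun t => t.2.2.2.2))
    (L : 𝒰 × 𝒱 → ℝ)
    (hL : ∀ x : 𝒳, (∑ t, if t.2.2.1 = x then p t * L (t.1, t.2.1) else 0) = 0)
    (F : ℝ → ℝ)
    (hF : F = fun ε =>
      miOf (fun t => p t * (1 + ε * L (t.1, t.2.1))) (fun t => t.1) (fun t => t.2.2.2.1) +
      miOf (fun t => p t * (1 + ε * L (t.1, t.2.1))) (fun t => t.2.1) (fun t => t.2.2.2.2) -
      miOf (fun t => p t * (1 + ε * L (t.1, t.2.1))) (fun t => t.1) (fun t => t.2.1))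
    (hmax : IsLocalMax F 0) :
    condExpSq p (fun t => L (t.1, t.2.1)) (fun t => (t.1, t.2.2.2.1)) +
      condExpSq p (fun t => L (t.1, t.2.1)) (fun t => (t.2.1, t.2.2.2.2)) -
      condExpSq p (fun t => L (t.1, t.2.1)) (fun t => (t.1, t.2.1)) ≤ 0 := by
  -- nonemptiness
  have hne : Nonempty (𝒰 × 𝒱 × 𝒳 × 𝒴 × 𝒵) := by
    by_contra h
    rw [not_nonempty_iff] at h
    rw [Finset.univ_eq_empty, Finset.sum_empty] at hsum
    exact one_ne_zero hsum.symm
  obtain ⟨t0⟩ := hne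
  -- positivity of the marginals
  have hpX : ∀ x, 0 < probOf p (fun t => t.2.2.1) x :=
    aux_probOf_pos hpos (fun x => ⟨(t0.1, t0.2.1, x, t0.2.2.2.1, t0.2.2.2.2), rfl⟩)
  have hpY : ∀ y, 0 < probOf p (fun t => t.2.2.2.1) y :=
    aux_probOf_pos hpos (fun y => ⟨(t0.1, t0.2.1, t0.2.2.1, y, t0.2.2.2.2), rfl⟩)
  have hpZ : ∀ z, 0 < probOf p (fun t => t.2.2.2.2) z :=
    aux_probOf_pos hpos (fun z => ⟨(t0.1, t0.2.1, t0.2.2.1, t0.2.2.2.1, z), rfl⟩)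
  have hpUY : ∀ w : 𝒰 × 𝒴, 0 < probOf p (fun t => (t.1, t.2.2.2.1)) w :=
    aux_probOf_pos hpos
      (fun w => ⟨(w.1, t0.2.1, t0.2.2.1, w.2, t0.2.2.2.2), rfl⟩)
  have hpVZ : ∀ w : 𝒱 × 𝒵, 0 < probOf p (fun t => (t.2.1, t.2.2.2.2)) w :=
    aux_probOf_pos hpos
      (fun w => ⟨(t0.1, w.1, t0.2.2.1, t0.2.2.2.1, w.2), rfl⟩)
  have hpUV : ∀ w : 𝒰 × 𝒱, 0 < probOf p (fun t => (t.1, t.2.1)) w :=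
    aux_probOf_pos hpos
      (fun w => ⟨(w.1, w.2, t0.2.2.1, t0.2.2.2.1, t0.2.2.2.2), rfl⟩)
  -- factorization from the Markov condition
  have hfac : ∀ u v x y z, p (u, v, x, y, z) =
      probOf p (fun t => (t.1, t.2.1, t.2.2.1)) (u, v, x) *
        probOf p (fun t => (t.2.2.1, t.2.2.2.1, t.2.2.2.2)) (x, y, z) /
          probOf p (fun t => t.2.2.1) x := by
    intro u v x y z
    have h := hM u v x y z
    rw [aux_expid] at h
    exact (eq_div_iff (ne_of_gt (hpX x))).2 h
  -- E[L|X] = 0 in marginal form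
  have hS : ∀ x, (∑ u, ∑ v,
      probOf p (fun t => (t.1, t.2.1, t.2.2.1)) (u, v, x) * L (u, v)) = 0 := by
    intro x
    have h1 : (∑ u, ∑ v,
        probOf p (fun t => (t.1, t.2.1, t.2.2.1)) (u, v, x) * L (u, v))
        = ∑ u, ∑ v, ∑ y, ∑ z, p (u, v, x, y, z) * L (u, v) := by
      refine Finset.sum_congr rfl fun u _ => Finset.sum_congr rfl fun v _ => ?_
      rw [aux_exp1]
      simp [Finset.sum_mul]
    rw [h1, ← aux_expX p L x]
    exact hL x
  -- sum reordering helper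
  have swap : ∀ (f : 𝒰 → 𝒱 → 𝒳 → ℝ),
      (∑ u, ∑ v, ∑ x, f u v x) = ∑ x, ∑ u, ∑ v, f u v x := by
    intro f
    calc (∑ u, ∑ v, ∑ x, f u v x) = ∑ u, ∑ x, ∑ v, f u v x :=
          Finset.sum_congr rfl fun u _ => Finset.sum_comm
      _ = ∑ x, ∑ u, ∑ v, f u v x := Finset.sum_comm
  -- E[L|Y] = 0
  have hbY : ∀ y, (∑ t, if t.2.2.2.1 = y then p t * L (t.1, t.2.1) else 0) = 0 := by
    intro y
    rw [aux_expY]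
    have h1 : (∑ u, ∑ v, ∑ x, ∑ z, p (u, v, x, y, z) * L (u, v))
        = ∑ u, ∑ v, ∑ x,
            (probOf p (fun t => (t.1, t.2.1, t.2.2.1)) (u, v, x) * L (u, v)) *
            (∑ z, probOf p (fun t => (t.2.2.1, t.2.2.2.1, t.2.2.2.2)) (x, y, z) /
              probOf p (fun t => t.2.2.1) x) := by
      refine Finset.sum_congr rfl fun u _ => Finset.sum_congr rfl fun v _ =>
        Finset.sum_congr rfl fun x _ => ?_
      rw [Finset.mul_sum]
      refine Finset.sum_congr rfl fun z _ => ?_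
      rw [hfac u v x y z]
      ring
    rw [h1]
    have h2 : (∑ u, ∑ v, ∑ x,
        (probOf p (fun t => (t.1, t.2.1, t.2.2.1)) (u, v, x) * L (u, v)) *
        (∑ z, probOf p (fun t => (t.2.2.1, t.2.2.2.1, t.2.2.2.2)) (x, y, z) /
          probOf p (fun t => t.2.2.1) x))
        = ∑ x, ∑ u, ∑ v,
        (probOf p (fun t => (t.1, t.2.1, t.2.2.1)) (u, v, x) * L (u, v)) *
        (∑ z, probOf p (fun t => (t.2.2.1, t.2.2.2.1, t.2.2.2.2)) (x, y, z) /
          probOf p (fun t => t.2.2.1) x) := by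
      exact swap _
    rw [h2]
    refine Finset.sum_eq_zero fun x _ => ?_
    simp only [← Finset.sum_mul]
    rw [hS x, zero_mul]
  -- E[L|Z] = 0
  have hbZ : ∀ z, (∑ t, if t.2.2.2.2 = z then p t * L (t.1, t.2.1) else 0) = 0 := by
    intro z
    rw [aux_expZ]
    have h1 : (∑ u, ∑ v, ∑ x, ∑ y, p (u, v, x, y, z) * L (u, v))
        = ∑ u, ∑ v, ∑ x,
            (probOf p (fun t => (t.1, t.2.1, t.2.2.1)) (u, v, x) * L (u, v)) *
            (∑ y, probOf p (fun t => (t.2.2.1, t.2.2.2.1, t.2.2.2.2)) (x, y, z) /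
              probOf p (fun t => t.2.2.1) x) := by
      refine Finset.sum_congr rfl fun u _ => Finset.sum_congr rfl fun v _ =>
        Finset.sum_congr rfl fun x _ => ?_
      rw [Finset.mul_sum]
      refine Finset.sum_congr rfl fun y _ => ?_
      rw [hfac u v x y z]
      ring
    rw [h1]
    have h2 : (∑ u, ∑ v, ∑ x,
        (probOf p (fun t => (t.1, t.2.1, t.2.2.1)) (u, v, x) * L (u, v)) *
        (∑ y, probOf p (fun t => (t.2.2.1, t.2.2.2.1, t.2.2.2.2)) (x, y, z) /
          probOf p (fun t => t.2.2.1) x))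
        = ∑ x, ∑ u, ∑ v,
        (probOf p (fun t => (t.1, t.2.1, t.2.2.1)) (u, v, x) * L (u, v)) *
        (∑ y, probOf p (fun t => (t.2.2.1, t.2.2.2.1, t.2.2.2.2)) (x, y, z) /
          probOf p (fun t => t.2.2.1) x) := by
      exact swap _
    rw [h2]
    refine Finset.sum_eq_zero fun x _ => ?_
    simp only [← Finset.sum_mul]
    rw [hS x, zero_mul]
  -- the "Y" and "Z" conditional-expectation second moments vanish
  have hSY : condExpSq p (fun t => L (t.1, t.2.1)) (fun t => t.2.2.2.1) = 0 := by
    unfold condExpSq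
    refine Finset.sum_eq_zero fun y _ => ?_
    rw [hbY y]
    simp
  have hSZ : condExpSq p (fun t => L (t.1, t.2.1)) (fun t => t.2.2.2.2) = 0 := by
    unfold condExpSq
    refine Finset.sum_eq_zero fun z _ => ?_
    rw [hbZ z]
    simp
  -- derivatives of the entropy terms
  obtain ⟨dY, hdY, hdY'⟩ := aux_key_deriv p (fun t => L (t.1, t.2.1))
    (fun t => t.2.2.2.1) hpY
  obtain ⟨dZ, hdZ, hdZ'⟩ := aux_key_deriv p (fun t => L (t.1, t.2.1))
    (fun t => t.2.2.2.2) hpZ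
  obtain ⟨dUY, hdUY, hdUY'⟩ := aux_key_deriv p (fun t => L (t.1, t.2.1))
    (fun t => (t.1, t.2.2.2.1)) hpUY
  obtain ⟨dVZ, hdVZ, hdVZ'⟩ := aux_key_deriv p (fun t => L (t.1, t.2.1))
    (fun t => (t.2.1, t.2.2.2.2)) hpVZ
  obtain ⟨dUV, hdUV, hdUV'⟩ := aux_key_deriv p (fun t => L (t.1, t.2.1))
    (fun t => (t.1, t.2.1)) hpUV
  -- the function F, with the H(U) and H(V) terms cancelled
  have hF' : F = fun ε =>
      entOf (fun t => p t * (1 + ε * L (t.1, t.2.1))) (fun t => t.2.2.2.1) +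
      entOf (fun t => p t * (1 + ε * L (t.1, t.2.1))) (fun t => t.2.2.2.2) -
      entOf (fun t => p t * (1 + ε * L (t.1, t.2.1))) (fun t => (t.1, t.2.2.2.1)) -
      entOf (fun t => p t * (1 + ε * L (t.1, t.2.1))) (fun t => (t.2.1, t.2.2.2.2)) +
      entOf (fun t => p t * (1 + ε * L (t.1, t.2.1))) (fun t => (t.1, t.2.1)) := by
    rw [hF]
    funext ε
    simp only [miOf]
    ring
  have hev : ∀ᶠ ε in nhds (0:ℝ),
      HasDerivAt F (dY ε + dZ ε - dUY ε - dVZ ε + dUV ε) ε := by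
    filter_upwards [hdY, hdZ, hdUY, hdVZ, hdUV] with ε h1 h2 h3 h4 h5
    rw [hF']
    exact (((h1.add h2).sub h3).sub h4).add h5
  have hd2 : HasDerivAt (fun ε => dY ε + dZ ε - dUY ε - dVZ ε + dUV ε)
      (-condExpSq p (fun t => L (t.1, t.2.1)) (fun t => t.2.2.2.1) +
       -condExpSq p (fun t => L (t.1, t.2.1)) (fun t => t.2.2.2.2) -
       -condExpSq p (fun t => L (t.1, t.2.1)) (fun t => (t.1, t.2.2.2.1)) -
       -condExpSq p (fun t => L (t.1, t.2.1)) (fun t => (t.2.1, t.2.2.2.2)) +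
       -condExpSq p (fun t => L (t.1, t.2.1)) (fun t => (t.1, t.2.1))) 0 :=
    (((hdY'.add hdZ').sub hdUY').sub hdVZ').add hdUV'
  have hfin := aux_second_deriv_test hev hd2 hmax
  rw [hSY, hSZ] at hfin
  linarith
end

section
/- Define g(x) = (1+x)²/(1+2x)² − ((1+4x)/(1+2x)²)^{(1+4x)/(4x(1+x))} for x ∈ (0, 1/2]. Then g(0⁺) = 0 (limiting value) and g(x) < 0 for all x ∈ (0, 1/2). -/
/-- The function `g` from the BSSC appendix:
`g(x) = (1+x)²/(1+2x)² − ((1+4x)/(1+2x)²)^((1+4x)/(4x(1+x)))`,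
where the power is the real power `Real.rpow`. -/
noncomputable def gBSSC (x : ℝ) : ℝ :=
  (1 + x) ^ 2 / (1 + 2 * x) ^ 2 -
    ((1 + 4 * x) / (1 + 2 * x) ^ 2) ^ ((1 + 4 * x) / (4 * x * (1 + x)))

open Real Filter Set

/-- Bounds on the exponent times the log of the base. -/
lemma gBSSC_E_bounds (x : ℝ) (hx : 0 < x) :
    -(x / (1 + x)) < (1 + 4 * x) / (4 * x * (1 + x)) * Real.log ((1 + 4 * x) / (1 + 2 * x) ^ 2) ∧
    (1 + 4 * x) / (4 * x * (1 + x)) * Real.log ((1 + 4 * x) / (1 + 2 * x) ^ 2) < 0 := by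
  have h1 : (0:ℝ) < 1 + x := by linarith
  have h2 : (0:ℝ) < 1 + 2 * x := by linarith
  have h4 : (0:ℝ) < 1 + 4 * x := by linarith
  have hsq : (0:ℝ) < (1 + 2 * x) ^ 2 := by positivity
  have hb : (0:ℝ) < (1 + 4 * x) / (1 + 2 * x) ^ 2 := by positivity
  have hblt : (1 + 4 * x) / (1 + 2 * x) ^ 2 < 1 := by
    rw [div_lt_one hsq]; nlinarith
  have he : (0:ℝ) < (1 + 4 * x) / (4 * x * (1 + x)) := by positivity
  have hlogneg : Real.log ((1 + 4 * x) / (1 + 2 * x) ^ 2) < 0 := Real.log_neg hb hblt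
  constructor
  · have hinv : ((1 + 4 * x) / (1 + 2 * x) ^ 2)⁻¹ = (1 + 2 * x) ^ 2 / (1 + 4 * x) := by
      rw [inv_div]
    have hlog2 : Real.log ((1 + 2 * x) ^ 2 / (1 + 4 * x)) < (1 + 2 * x) ^ 2 / (1 + 4 * x) - 1 := by
      apply Real.log_lt_sub_one_of_pos (by positivity)
      intro h
      rw [div_eq_one_iff_eq (ne_of_gt h4)] at h
      nlinarith
    have hval : (1 + 2 * x) ^ 2 / (1 + 4 * x) - 1 = 4 * x ^ 2 / (1 + 4 * x) := by
      field_simp; ring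
    have hneglog : -Real.log ((1 + 4 * x) / (1 + 2 * x) ^ 2) < 4 * x ^ 2 / (1 + 4 * x) := by
      rw [← Real.log_inv, hinv]; linarith
    have hmul : (1 + 4 * x) / (4 * x * (1 + x)) * (-Real.log ((1 + 4 * x) / (1 + 2 * x) ^ 2)) <
        (1 + 4 * x) / (4 * x * (1 + x)) * (4 * x ^ 2 / (1 + 4 * x)) :=
      mul_lt_mul_of_pos_left hneglog he
    have heq : (1 + 4 * x) / (4 * x * (1 + x)) * (4 * x ^ 2 / (1 + 4 * x)) = x / (1 + x) := by
      field_simp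
    rw [heq, mul_neg] at hmul
    linarith
  · exact mul_neg_of_pos_of_neg he hlogneg

/-- Bound on the log of the first term. -/
lemma gBSSC_logA (x : ℝ) (hx : 0 < x) :
    Real.log ((1 + x) ^ 2 / (1 + 2 * x) ^ 2) < -(x / (1 + x)) := by
  have h1 : (0:ℝ) < 1 + x := by linarith
  have h2 : (0:ℝ) < 1 + 2 * x := by linarith
  have hw : (0:ℝ) < (1 + x) / (1 + 2 * x) := by positivity
  have hlog : Real.log ((1 + x) / (1 + 2 * x)) < (1 + x) / (1 + 2 * x) - 1 := by
    apply Real.log_lt_sub_one_of_pos hw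
    intro h
    rw [div_eq_one_iff_eq (ne_of_gt h2)] at h
    linarith
  have hval : (1 + x) / (1 + 2 * x) - 1 = -(x / (1 + 2 * x)) := by
    field_simp; ring
  have hlog' : Real.log ((1 + x) / (1 + 2 * x)) < -(x / (1 + 2 * x)) := by linarith
  have hcross : x / (1 + x) < 2 * (x / (1 + 2 * x)) := by
    rw [mul_div_assoc', div_lt_div_iff₀ h1 h2]
    nlinarith
  have hA : (1 + x) ^ 2 / (1 + 2 * x) ^ 2 = ((1 + x) / (1 + 2 * x)) ^ 2 := by
    rw [div_pow]
  rw [hA, Real.log_pow]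
  push_cast
  nlinarith [hlog', hcross]

theorem gBSSC_neg_of_pos (x : ℝ) (hx : 0 < x) : gBSSC x < 0 := by
  have h1 : (0:ℝ) < 1 + x := by linarith
  have h2 : (0:ℝ) < 1 + 2 * x := by linarith
  have hA : (0:ℝ) < (1 + x) ^ 2 / (1 + 2 * x) ^ 2 := by positivity
  have hb : (0:ℝ) < (1 + 4 * x) / (1 + 2 * x) ^ 2 := by positivity
  obtain ⟨hE1, _⟩ := gBSSC_E_bounds x hx
  have hlogA := gBSSC_logA x hx
  unfold gBSSC
  rw [sub_neg, Real.rpow_def_of_pos hb, ← Real.exp_log hA]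
  apply Real.exp_lt_exp.mpr
  calc Real.log ((1 + x) ^ 2 / (1 + 2 * x) ^ 2) < -(x / (1 + x)) := hlogA
    _ < (1 + 4 * x) / (4 * x * (1 + x)) * Real.log ((1 + 4 * x) / (1 + 2 * x) ^ 2) := hE1
    _ = Real.log ((1 + 4 * x) / (1 + 2 * x) ^ 2) * ((1 + 4 * x) / (4 * x * (1 + x))) :=
      mul_comm _ _

/-- `g(0⁺) = 0` (as a limiting value) and `g(x) < 0` for all `x ∈ (0, 1/2)`. -/
theorem gBSSC_limit_and_neg :
    Filter.Tendsto gBSSC (nhdsWithin 0 (Set.Ioi 0)) (nhds 0) ∧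
      ∀ x ∈ Set.Ioo (0:ℝ) (1/2), gBSSC x < 0 := by
  constructor
  · -- limit part
    have hEq : ∀ᶠ x in nhdsWithin (0:ℝ) (Set.Ioi 0),
        gBSSC x = (1 + x) ^ 2 / (1 + 2 * x) ^ 2 -
          Real.exp ((1 + 4 * x) / (4 * x * (1 + x)) *
            Real.log ((1 + 4 * x) / (1 + 2 * x) ^ 2)) := by
      filter_upwards [self_mem_nhdsWithin] with x hx
      have hx0 : (0:ℝ) < x := hx
      have hb : (0:ℝ) < (1 + 4 * x) / (1 + 2 * x) ^ 2 := by positivity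
      unfold gBSSC
      rw [Real.rpow_def_of_pos hb, mul_comm (Real.log _)]
    have hfirst : Tendsto (fun x : ℝ => (1 + x) ^ 2 / (1 + 2 * x) ^ 2)
        (nhdsWithin 0 (Set.Ioi 0)) (nhds 1) := by
      have hc : ContinuousAt (fun x : ℝ => (1 + x) ^ 2 / (1 + 2 * x) ^ 2) 0 := by
        apply ContinuousAt.div (by fun_prop) (by fun_prop)
        norm_num
      have := hc.tendsto.mono_left (nhdsWithin_le_nhds (s := Set.Ioi 0))
      simpa using this
    have hE : Tendsto (fun x : ℝ => (1 + 4 * x) / (4 * x * (1 + x)) *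
        Real.log ((1 + 4 * x) / (1 + 2 * x) ^ 2)) (nhdsWithin 0 (Set.Ioi 0)) (nhds 0) := by
      have hlow : Tendsto (fun x : ℝ => -(x / (1 + x))) (nhdsWithin 0 (Set.Ioi 0)) (nhds 0) := by
        have hc : ContinuousAt (fun x : ℝ => -(x / (1 + x))) 0 := by
          apply ContinuousAt.neg
          apply ContinuousAt.div (by fun_prop) (by fun_prop)
          norm_num
        have := hc.tendsto.mono_left (nhdsWithin_le_nhds (s := Set.Ioi 0))
        simpa using this
      have hhigh : Tendsto (fun _ : ℝ => (0:ℝ)) (nhdsWithin (0:ℝ) (Set.Ioi 0)) (nhds 0) :=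
        tendsto_const_nhds
      refine tendsto_of_tendsto_of_tendsto_of_le_of_le' hlow hhigh ?_ ?_
      · filter_upwards [self_mem_nhdsWithin] with x hx
        exact le_of_lt (gBSSC_E_bounds x hx).1
      · filter_upwards [self_mem_nhdsWithin] with x hx
        exact le_of_lt (gBSSC_E_bounds x hx).2
    have hexp : Tendsto (fun x : ℝ => Real.exp ((1 + 4 * x) / (4 * x * (1 + x)) *
        Real.log ((1 + 4 * x) / (1 + 2 * x) ^ 2))) (nhdsWithin 0 (Set.Ioi 0)) (nhds 1) := by
      have := (Real.continuous_exp.tendsto 0).comp hE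
      simpa [Function.comp_def] using this
    have := hfirst.sub hexp
    rw [sub_self] at this
    exact Tendsto.congr' (Filter.EventuallyEq.symm hEq) this
  · intro x hx
    exact gBSSC_neg_of_pos x hx.1
end

section
/- For finite random variables U, X with no nontrivial Gács–Körner common information (i.e., the only common functions are constants), the quantity sup over zero-mean, unit variance functions L(X), T(U) of (E[L(X)T(U)])² equals the squared cosine of the angle between the subspaces V'_X and V'_U of zero-mean square-integrable functions of X and of U respectively, and this supremum is strictly less than 1. -/
/-- The set of squared correlations `(E[L(X)T(U)])²` over zero-mean, unit-variance
functions `L` of `X` and `T` of `U`. -/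
def corrSqSet {Ω 𝒰 𝒳 : Type*} [Fintype Ω] (p : Ω → ℝ) (U : Ω → 𝒰) (X : Ω → 𝒳) :
    Set ℝ :=
  { r | ∃ (L : 𝒳 → ℝ) (T : 𝒰 → ℝ),
      (∑ ω, p ω * L (X ω)) = 0 ∧ (∑ ω, p ω * L (X ω) ^ 2) = 1 ∧
      (∑ ω, p ω * T (U ω)) = 0 ∧ (∑ ω, p ω * T (U ω) ^ 2) = 1 ∧
      r = (∑ ω, p ω * (L (X ω) * T (U ω))) ^ 2 }

/-- The squared cosine of the angle between the subspaces `V'_X` and `V'_U` of zero-mean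
square-integrable functions measurable with respect to `X` and `U` respectively,
inside `L²` of the underlying finite probability space with inner product `E[fg]`:
the supremum of the squared inner products `E[l·t]²` over unit vectors `l ∈ V'_X`,
`t ∈ V'_U`. -/
noncomputable def cosSqAngle {Ω 𝒰 𝒳 : Type*} [Fintype Ω] (p : Ω → ℝ)
    (U : Ω → 𝒰) (X : Ω → 𝒳) : ℝ :=
  sSup { r | ∃ l t : Ω → ℝ,
      (∃ L : 𝒳 → ℝ, l = fun ω => L (X ω)) ∧ (∃ T : 𝒰 → ℝ, t = fun ω => T (U ω)) ∧
      (∑ ω, p ω * l ω) = 0 ∧ (∑ ω, p ω * l ω ^ 2) = 1 ∧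
      (∑ ω, p ω * t ω) = 0 ∧ (∑ ω, p ω * t ω ^ 2) = 1 ∧
      r = (∑ ω, p ω * (l ω * t ω)) ^ 2 }

/-- Every element of `corrSqSet` is strictly less than 1, given no nontrivial GK
common information. -/
lemma corrSqSet_mem_lt_one
    {Ω 𝒰 𝒳 : Type*} [Fintype Ω] [Fintype 𝒰] [Fintype 𝒳]
    (p : Ω → ℝ) (hp : IsPMF p) (hpos : ∀ ω, 0 < p ω)
    (U : Ω → 𝒰) (X : Ω → 𝒳)
    (hGK : ∀ (a : 𝒳 → ℝ) (b : 𝒰 → ℝ), (∀ ω, a (X ω) = b (U ω)) →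
      ∃ c : ℝ, ∀ ω, a (X ω) = c)
    {r : ℝ} (hr : r ∈ corrSqSet p U X) : r < 1 := by
  obtain ⟨L, T, hl0, hl2, ht0, ht2, rfl⟩ := hr
  set s : ℝ := ∑ ω, p ω * (L (X ω) * T (U ω)) with hs
  have hexp : ∑ ω, p ω * (L (X ω) - s * T (U ω)) ^ 2 = 1 - s ^ 2 := by
    have key : ∀ ω ∈ Finset.univ, p ω * (L (X ω) - s * T (U ω)) ^ 2
        = p ω * L (X ω) ^ 2 - (2 * s) * (p ω * (L (X ω) * T (U ω)))
          + s ^ 2 * (p ω * T (U ω) ^ 2) := fun ω _ => by ring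
    rw [Finset.sum_congr rfl key, Finset.sum_add_distrib, Finset.sum_sub_distrib,
      ← Finset.mul_sum, ← Finset.mul_sum, hl2, ht2, ← hs]
    ring
  have hnonneg : (0:ℝ) ≤ ∑ ω, p ω * (L (X ω) - s * T (U ω)) ^ 2 :=
    Finset.sum_nonneg fun ω _ => mul_nonneg (hpos ω).le (sq_nonneg _)
  have hle : s ^ 2 ≤ 1 := by nlinarith [hexp, hnonneg]
  rcases lt_or_eq_of_le hle with h | h
  · exact h
  · exfalso
    have hzero : ∑ ω, p ω * (L (X ω) - s * T (U ω)) ^ 2 = 0 := by rw [hexp, h]; ring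
    have heq : ∀ ω, L (X ω) = s * T (U ω) := by
      intro ω
      have h0 : p ω * (L (X ω) - s * T (U ω)) ^ 2 = 0 :=
        (Finset.sum_eq_zero_iff_of_nonneg
          (fun ω _ => mul_nonneg (hpos ω).le (sq_nonneg _))).1 hzero ω (Finset.mem_univ ω)
      have h1 : (L (X ω) - s * T (U ω)) ^ 2 = 0 := by
        rcases mul_eq_zero.1 h0 with h | h
        · exact absurd h (hpos ω).ne'
        · exact h
      have := pow_eq_zero_iff (n := 2) (by norm_num) |>.1 h1
      linarith
    obtain ⟨c, hc⟩ := hGK L (fun u => s * T u) heq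
    have hc0 : c = 0 := by
      have : ∑ ω, p ω * L (X ω) = c := by
        rw [Finset.sum_congr rfl fun ω _ => by rw [hc ω], ← Finset.sum_mul, hp.2, one_mul]
      rw [this] at hl0; exact hl0
    have : ∑ ω, p ω * L (X ω) ^ 2 = 0 := by
      rw [Finset.sum_congr rfl fun ω _ => by rw [hc ω, hc0]]
      simp
    rw [hl2] at this; exact one_ne_zero this

/-- Coordinate bound for functions supported on the range with unit second moment. -/
lemma norm_le_of_unitVar {Ω α : Type*} [Fintype Ω] [Fintype α]
    (p : Ω → ℝ) (hpos : ∀ ω, 0 < p ω) (hΩ : (Finset.univ : Finset Ω).Nonempty)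
    (Y : Ω → α) (g : α → ℝ)
    (hg : (∑ ω, p ω * g (Y ω) ^ 2) = 1) (hg0 : ∀ a, a ∉ Set.range Y → g a = 0) :
    ‖g‖ ≤ Real.sqrt (1 / Finset.univ.inf' hΩ p) := by
  set m : ℝ := Finset.univ.inf' hΩ p with hm
  have hm0 : 0 < m := by
    obtain ⟨ω, _, hω⟩ := Finset.exists_mem_eq_inf' hΩ p
    rw [hm, hω]; exact hpos ω
  have hC0 : (0:ℝ) ≤ Real.sqrt (1 / m) := Real.sqrt_nonneg _
  refine (pi_norm_le_iff_of_nonneg hC0).2 fun a => ?_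
  by_cases ha : a ∈ Set.range Y
  · obtain ⟨ω₀, rfl⟩ := ha
    have hsingle : p ω₀ * g (Y ω₀) ^ 2 ≤ 1 := by
      rw [← hg]
      exact Finset.single_le_sum (f := fun ω => p ω * g (Y ω) ^ 2)
        (fun ω _ => mul_nonneg (hpos ω).le (sq_nonneg _)) (Finset.mem_univ ω₀)
    have hmle : m ≤ p ω₀ := Finset.inf'_le p (Finset.mem_univ ω₀)
    have hsq : g (Y ω₀) ^ 2 ≤ 1 / m := by
      rw [le_div_iff₀ hm0]
      calc g (Y ω₀) ^ 2 * m ≤ g (Y ω₀) ^ 2 * p ω₀ :=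
            mul_le_mul_of_nonneg_left hmle (sq_nonneg _)
        _ = p ω₀ * g (Y ω₀) ^ 2 := by ring
        _ ≤ 1 := hsingle
    have h7 : ‖g (Y ω₀)‖ = Real.sqrt (g (Y ω₀) ^ 2) := by
      rw [Real.sqrt_sq_eq_abs, Real.norm_eq_abs]
    rw [h7]
    exact Real.sqrt_le_sqrt hsq
  · rw [hg0 a ha]; simpa using hC0

set_option maxHeartbeats 1600000 in
/-- The set of squared correlations is compact (when the underlying space is nonempty
and all probabilities positive). -/
lemma corrSqSet_isCompact
    {Ω 𝒰 𝒳 : Type*} [Fintype Ω] [Fintype 𝒰] [Fintype 𝒳]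
    (p : Ω → ℝ) (hpos : ∀ ω, 0 < p ω) (hΩ : (Finset.univ : Finset Ω).Nonempty)
    (U : Ω → 𝒰) (X : Ω → 𝒳) : IsCompact (corrSqSet p U X) := by
  classical
  let K : Set ((𝒳 → ℝ) × (𝒰 → ℝ)) := { z |
      (∑ ω, p ω * z.1 (X ω)) = 0 ∧ (∑ ω, p ω * z.1 (X ω) ^ 2) = 1 ∧
      (∑ ω, p ω * z.2 (U ω)) = 0 ∧ (∑ ω, p ω * z.2 (U ω) ^ 2) = 1 ∧
      (∀ x, x ∉ Set.range X → z.1 x = 0) ∧ (∀ u, u ∉ Set.range U → z.2 u = 0) }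
  let f : ((𝒳 → ℝ) × (𝒰 → ℝ)) → ℝ :=
    fun z => (∑ ω, p ω * (z.1 (X ω) * z.2 (U ω))) ^ 2
  have hfc : Continuous f := by unfold f; fun_prop
  -- corrSqSet = f '' K
  have himg : corrSqSet p U X = f '' K := by
    ext r
    constructor
    · rintro ⟨L, T, h1, h2, h3, h4, h5⟩
      have eL : ∀ ω, (if X ω ∈ Set.range X then L (X ω) else 0) = L (X ω) :=
        fun ω => if_pos ⟨ω, rfl⟩
      have eT : ∀ ω, (if U ω ∈ Set.range U then T (U ω) else 0) = T (U ω) :=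
        fun ω => if_pos ⟨ω, rfl⟩
      refine ⟨((fun x => if x ∈ Set.range X then L x else 0),
               (fun u => if u ∈ Set.range U then T u else 0)), ?_, ?_⟩
      · refine ⟨?_, ?_, ?_, ?_, fun x hx => if_neg hx, fun u hu => if_neg hu⟩
        · show (∑ ω, p ω * (if X ω ∈ Set.range X then L (X ω) else 0)) = 0
          rw [Finset.sum_congr rfl fun ω _ => by rw [eL ω]]; exact h1
        · show (∑ ω, p ω * (if X ω ∈ Set.range X then L (X ω) else 0) ^ 2) = 1
          rw [Finset.sum_congr rfl fun ω _ => by rw [eL ω]]; exact h2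
        · show (∑ ω, p ω * (if U ω ∈ Set.range U then T (U ω) else 0)) = 0
          rw [Finset.sum_congr rfl fun ω _ => by rw [eT ω]]; exact h3
        · show (∑ ω, p ω * (if U ω ∈ Set.range U then T (U ω) else 0) ^ 2) = 1
          rw [Finset.sum_congr rfl fun ω _ => by rw [eT ω]]; exact h4
      · show (∑ ω, p ω * ((if X ω ∈ Set.range X then L (X ω) else 0) *
              (if U ω ∈ Set.range U then T (U ω) else 0))) ^ 2 = r
        rw [Finset.sum_congr rfl fun ω _ => by rw [eL ω, eT ω]]
        exact h5.symm
    · rintro ⟨⟨L, T⟩, ⟨h1, h2, h3, h4, _, _⟩, rfl⟩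
      exact ⟨L, T, h1, h2, h3, h4, rfl⟩
  -- K is closed
  have hKclosed : IsClosed K := by
    refine IsClosed.inter (isClosed_eq (by fun_prop) continuous_const) ?_
    refine IsClosed.inter (isClosed_eq (by fun_prop) continuous_const) ?_
    refine IsClosed.inter (isClosed_eq (by fun_prop) continuous_const) ?_
    refine IsClosed.inter (isClosed_eq (by fun_prop) continuous_const) ?_
    refine IsClosed.inter ?_ ?_
    · have e : {z : (𝒳 → ℝ) × (𝒰 → ℝ) | ∀ x, x ∉ Set.range X → z.1 x = 0}
          = ⋂ x ∈ {x | x ∉ Set.range X}, {z : (𝒳 → ℝ) × (𝒰 → ℝ) | z.1 x = 0} := by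
        ext z; simp [Set.mem_iInter]
      show IsClosed {z : (𝒳 → ℝ) × (𝒰 → ℝ) | ∀ x, x ∉ Set.range X → z.1 x = 0}
      rw [e]
      exact isClosed_biInter fun x _ => isClosed_eq (by fun_prop) continuous_const
    · have e : {z : (𝒳 → ℝ) × (𝒰 → ℝ) | ∀ u, u ∉ Set.range U → z.2 u = 0}
          = ⋂ u ∈ {u | u ∉ Set.range U}, {z : (𝒳 → ℝ) × (𝒰 → ℝ) | z.2 u = 0} := by
        ext z; simp [Set.mem_iInter]
      show IsClosed {z : (𝒳 → ℝ) × (𝒰 → ℝ) | ∀ u, u ∉ Set.range U → z.2 u = 0}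
      rw [e]
      exact isClosed_biInter fun u _ => isClosed_eq (by fun_prop) continuous_const
  -- K is bounded
  have hKbdd : Bornology.IsBounded K := by
    rw [isBounded_iff_forall_norm_le]
    refine ⟨Real.sqrt (1 / Finset.univ.inf' hΩ p), ?_⟩
    rintro z ⟨_, h2, _, h4, h5, h6⟩
    have b1 : ‖z.1‖ ≤ Real.sqrt (1 / Finset.univ.inf' hΩ p) :=
      norm_le_of_unitVar p hpos hΩ X z.1 h2 h5
    have b2 : ‖z.2‖ ≤ Real.sqrt (1 / Finset.univ.inf' hΩ p) :=
      norm_le_of_unitVar p hpos hΩ U z.2 h4 h6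
    rw [Prod.norm_def]
    exact max_le b1 b2
  have hKcompact : IsCompact K := Metric.isCompact_of_isClosed_isBounded hKclosed hKbdd
  rw [himg]
  exact hKcompact.image hfc

/-- For finite random variables `U, X` with no nontrivial Gács–Körner common information
(the only common functions of `X` and of `U` are constants), the supremum over
zero-mean, unit-variance functions `L(X)`, `T(U)` of `(E[L(X)T(U)])²` equals the squared
cosine of the angle between the subspaces `V'_X` and `V'_U` of zero-mean functions of
`X` and of `U`, and this supremum is strictly less than `1`. -/
theorem maximal_correlation_lt_one
    {Ω 𝒰 𝒳 : Type*} [Fintype Ω] [Fintype 𝒰] [Fintype 𝒳]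
    (p : Ω → ℝ) (hp : IsPMF p) (hpos : ∀ ω, 0 < p ω)
    (U : Ω → 𝒰) (X : Ω → 𝒳)
    (hGK : ∀ (a : 𝒳 → ℝ) (b : 𝒰 → ℝ), (∀ ω, a (X ω) = b (U ω)) →
      ∃ c : ℝ, ∀ ω, a (X ω) = c) :
    sSup (corrSqSet p U X) = cosSqAngle p U X ∧ sSup (corrSqSet p U X) < 1 := by
  classical
  have hset : corrSqSet p U X = { r | ∃ l t : Ω → ℝ,
      (∃ L : 𝒳 → ℝ, l = fun ω => L (X ω)) ∧ (∃ T : 𝒰 → ℝ, t = fun ω => T (U ω)) ∧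
      (∑ ω, p ω * l ω) = 0 ∧ (∑ ω, p ω * l ω ^ 2) = 1 ∧
      (∑ ω, p ω * t ω) = 0 ∧ (∑ ω, p ω * t ω ^ 2) = 1 ∧
      r = (∑ ω, p ω * (l ω * t ω)) ^ 2 } := by
    ext r
    constructor
    · rintro ⟨L, T, h1, h2, h3, h4, h5⟩
      exact ⟨fun ω => L (X ω), fun ω => T (U ω), ⟨L, rfl⟩, ⟨T, rfl⟩, h1, h2, h3, h4, h5⟩
    · rintro ⟨l, t, ⟨L, rfl⟩, ⟨T, rfl⟩, h1, h2, h3, h4, h5⟩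
      exact ⟨L, T, h1, h2, h3, h4, h5⟩
  have heq : sSup (corrSqSet p U X) = cosSqAngle p U X := by
    unfold cosSqAngle; rw [hset]
  refine ⟨heq, ?_⟩
  rcases Set.eq_empty_or_nonempty (corrSqSet p U X) with hemp | hne
  · rw [hemp, Real.sSup_empty]; norm_num
  obtain ⟨r₀, L₀, T₀, _, hL₀2, _, _, _⟩ := hne
  have hΩ : (Finset.univ : Finset Ω).Nonempty := by
    by_contra h
    rw [Finset.not_nonempty_iff_eq_empty] at h
    rw [h, Finset.sum_empty] at hL₀2
    exact one_ne_zero hL₀2.symm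
  have hne' : (corrSqSet p U X).Nonempty := ⟨r₀, L₀, T₀, by assumption, hL₀2,
    by assumption, by assumption, by assumption⟩
  have hcompact := corrSqSet_isCompact p hpos hΩ U X
  have hmem : sSup (corrSqSet p U X) ∈ corrSqSet p U X := hcompact.sSup_mem hne'
  exact corrSqSet_mem_lt_one p hp hpos U X hGK hmem
end
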